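/- arXiv:math/9201281 — 7 statements merged into one kernel-verified Lean document; each statement's English description precedes it below -/
import Mathlib

section
/- There exist a real number λ > α·(α - 1) and a vector v ∈ CN with v_m = 1 such that A·v = λ·v; in particular A has a real eigenvalue strictly greater than α·(α - 1) with an eigenvector whose coordinates are nonnegative and nondecreasing. -/
/-!
A Krein–Rutman argument for the cone `CN` of nonnegative nondecreasing vectors. The matrix `A`
maps `CN` into itself, and since the positive entry of row `i` sits in column `m/2 + ⌈i/2⌉`,
positivity of the last coordinate spreads to the last `2^k` coordinates after `k` steps; hence
`A^n` maps `CN \ {0}` into the interior of `CN`. Maximize `r` over the compact set of pairs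
`(r, v)` with `v ∈ CN`, `v_m = 1`, `r ≥ 0` and `A v - r v ∈ CN`: if `A v - r v ≠ 0`, then `A^n`
pushes it into the interior, leaving room to increase `r`, so the maximizer is an eigenpair.
Finally the last row reads `r = α² - α v₁`, and `v₁ = 1` would make `v` constant and force
`β₁ = α`.
-/

open Set Filter Topology Matrix

section ConeEigenvector

variable {E : Type*} [AddCommGroup E] [Module ℝ E] [TopologicalSpace E]
  [IsTopologicalAddGroup E] [ContinuousSMul ℝ E]

lemma exists_pos_sub_smul_mem {s : Set E} {x : E} (hs : s ∈ 𝓝 x) (y : E) :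
    ∃ ε > (0 : ℝ), x - ε • y ∈ s := by
  have hlim : Tendsto (fun ε : ℝ => x - ε • y) (𝓝[>] 0) (𝓝 x) := by
    have hc : Continuous fun ε : ℝ => x - ε • y := by fun_prop
    simpa using (hc.tendsto 0).mono_left nhdsWithin_le_nhds
  obtain ⟨ε, hεs, hε⟩ := ((hlim.eventually_mem hs).and self_mem_nhdsWithin).exists
  exact ⟨ε, hε, hεs⟩

lemma exists_add_pos_sub_smul_mem {K : Set E} (hK : ∀ c : ℝ, 0 < c → ∀ x ∈ K, c • x ∈ K)
    {φ : E →L[ℝ] ℝ} (hφ : ∀ x ∈ K, 0 ≤ φ x) {T : E →L[ℝ] E} {N : ℕ}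
    (hN : ∀ x ∈ K, x ≠ 0 → (T ^ N) x ∈ interior K) {r : ℝ} {v : E} (hv : v ∈ K)
    (hφv : φ v = 1) (hw : T v - r • v ∈ K) (hw0 : T v - r • v ≠ 0) :
    ∃ ε > (0 : ℝ), ∃ u ∈ K, φ u = 1 ∧ T u - (r + ε) • u ∈ K := by
  set y := (T ^ N) v
  have hy : y ∈ interior K := hN v hv (by rintro rfl; simp at hφv)
  obtain ⟨δ, hδ, hyδ⟩ := exists_pos_sub_smul_mem (mem_interior_iff_mem_nhds.mp hy) v
  have hφy : 0 < φ y := by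
    have := hφ _ hyδ
    simp only [map_sub, map_smul, hφv, smul_eq_mul, mul_one] at this
    linarith
  have hz : T y - r • y ∈ interior K := by
    have hcomm : (T ^ N) (T v) = T y := congr($(pow_mul_comm' T N) v)
    simpa only [map_sub, map_smul, hcomm] using hN _ hw hw0
  obtain ⟨ε, hε, hzε⟩ := exists_pos_sub_smul_mem (mem_interior_iff_mem_nhds.mp hz) y
  refine ⟨ε, hε, (φ y)⁻¹ • y, hK _ (inv_pos.2 hφy) y (interior_subset hy), ?_, ?_⟩
  · simp [hφy.ne']
  · convert hK _ (inv_pos.2 hφy) _ hzε using 1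
    simp only [map_smul]
    module

theorem exists_eigenvector_mem_of_pow_mapsTo_interior {K : Set E} (hKc : IsClosed K)
    (hK : ∀ c : ℝ, 0 < c → ∀ x ∈ K, c • x ∈ K) (φ : E →L[ℝ] ℝ) (hφ : ∀ x ∈ K, 0 ≤ φ x)
    (hB : IsCompact (K ∩ {x | φ x = 1})) (hBne : (K ∩ {x | φ x = 1}).Nonempty)
    (T : E →L[ℝ] E) (hT : MapsTo T K K) (N : ℕ)
    (hN : ∀ x ∈ K, x ≠ 0 → (T ^ N) x ∈ interior K) :
    ∃ r : ℝ, ∃ v ∈ K, φ v = 1 ∧ T v = r • v := by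
  obtain ⟨M, hM⟩ := hB.bddAbove_image (φ.continuous.comp T.continuous).continuousOn
  set L := {p : ℝ × E | 0 ≤ p.1 ∧ p.2 ∈ K ∩ {x | φ x = 1} ∧ T p.2 - p.1 • p.2 ∈ K}
  have hL : IsCompact L := by
    refine (isCompact_Icc (a := 0) (b := M)).prod hB |>.of_isClosed_subset ?_ ?_
    · exact (isClosed_le continuous_const continuous_fst).inter
        (((hKc.inter (isClosed_eq φ.continuous continuous_const)).preimage continuous_snd).inter
          (hKc.preimage (by fun_prop)))
    · rintro ⟨r, v⟩ ⟨hr, hvB, hw⟩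
      have hφv : φ v = 1 := hvB.2
      have := hφ _ hw
      simp only [map_sub, map_smul, hφv, smul_eq_mul, mul_one, sub_nonneg] at this
      exact ⟨⟨hr, this.trans (hM ⟨v, hvB, rfl⟩)⟩, hvB⟩
  obtain ⟨v₀, hv₀⟩ := hBne
  obtain ⟨⟨r, v⟩, ⟨hr, hvB, hw⟩, hmax⟩ :=
    hL.exists_isMaxOn ⟨(0, v₀), le_rfl, hv₀, by simpa using hT hv₀.1⟩ continuous_fst.continuousOn
  refine ⟨r, v, hvB.1, hvB.2, ?_⟩
  by_contra hne
  obtain ⟨ε, hε, u, hu, hφu, hwu⟩ :=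
    exists_add_pos_sub_smul_mem hK hφ hN hvB.1 hvB.2 hw (sub_ne_zero.2 hne)
  have : r + ε ≤ r := hmax (show (r + ε, u) ∈ L from ⟨by dsimp only; linarith, ⟨hu, hφu⟩, hwu⟩)
  linarith

end ConeEigenvector

def monotoneCone (ι : Type*) [Preorder ι] : Set (ι → ℝ) := {v | 0 ≤ v ∧ Monotone v}

section MonotoneCone

variable {ι : Type*} [Preorder ι]

lemma isClosed_monotoneCone : IsClosed (monotoneCone ι) :=
  (isClosed_le continuous_const continuous_id).inter isClosed_monotone

lemma smul_mem_monotoneCone {c : ℝ} (hc : 0 ≤ c) {v : ι → ℝ} (hv : v ∈ monotoneCone ι) :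
    c • v ∈ monotoneCone ι :=
  ⟨smul_nonneg hc hv.1, hv.2.const_smul hc⟩

lemma eq_zero_of_mem_monotoneCone {t : ι} (ht : IsTop t) {v : ι → ℝ}
    (hv : v ∈ monotoneCone ι) (hvt : v t = 0) : v = 0 :=
  funext fun i => le_antisymm ((hv.2 (ht i)).trans_eq hvt) (hv.1 i)

lemma isCompact_monotoneCone_inter_apply_eq_one [Finite ι] {t : ι} (ht : IsTop t) :
    IsCompact (monotoneCone ι ∩ {v | v t = 1}) :=
  (isCompact_Icc (a := 0) (b := 1)).of_isClosed_subset
    (isClosed_monotoneCone.inter (isClosed_eq (continuous_apply t) continuous_const))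
    fun _ ⟨hv, hvt⟩ => ⟨hv.1, fun i => (hv.2 (ht i)).trans_eq hvt⟩

lemma isOpen_setOf_strictMono [Finite ι] : IsOpen {v : ι → ℝ | StrictMono v} := by
  have h : {v : ι → ℝ | StrictMono v} = ⋂ p ∈ {p : ι × ι | p.1 < p.2}, {v | v p.1 < v p.2} := by
    ext v
    simp [StrictMono]
  rw [h]
  exact (toFinite _).isOpen_biInter fun p _ => isOpen_lt (continuous_apply _) (continuous_apply _)

end MonotoneCone

lemma setOf_pos_strictMono_subset_interior {ι : Type*} [PartialOrder ι] [Finite ι] :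
    {v : ι → ℝ | (∀ i, 0 < v i) ∧ StrictMono v} ⊆ interior (monotoneCone ι) := by
  refine interior_maximal (fun v hv => ⟨fun i => (hv.1 i).le, hv.2.monotone⟩) ?_
  rw [ofPred_and, ofPred_forall]
  exact (isOpen_iInter_of_finite fun i => isOpen_lt continuous_const (continuous_apply i)).inter
    isOpen_setOf_strictMono

/-- The 0-based columns of the entries `-α` and `α β_i` in row `i`; note that
`(i + 2) / 2 = ⌈(i + 1) / 2⌉`. -/
def negCol (m : ℕ) (i : Fin m) : Fin m := ⟨m / 2 - (i + 2) / 2, by omega⟩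

def posCol (m : ℕ) (i : Fin m) : Fin m := ⟨m / 2 + (i + 2) / 2 - 1, by omega⟩

section Columns

variable {m : ℕ}

lemma negCol_le_posCol (i : Fin m) : negCol m i ≤ posCol m i := by
  simp only [Fin.le_def, negCol, posCol]
  omega

lemma negCol_antitone : Antitone (negCol m) := fun i j h => by
  simp only [Fin.le_def, negCol] at h ⊢
  omega

lemma posCol_monotone : Monotone (posCol m) := fun i j h => by
  simp only [Fin.le_def, posCol] at h ⊢
  omega

lemma negCol_ne_posCol (hm : 2 ≤ m) (i : Fin m) : negCol m i ≠ posCol m i := by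
  simp only [ne_eq, Fin.ext_iff, negCol, posCol]
  omega

lemma le_posCol_add_pow (hm : Even m) {i : Fin m} {k : ℕ} (hi : m ≤ i + 2 ^ (k + 1)) :
    m ≤ posCol m i + 2 ^ k := by
  obtain ⟨l, rfl⟩ := hm
  simp only [posCol, pow_succ] at hi ⊢
  omega

lemma val_negCol_of_val_eq_sub_one (i : Fin m) (hi : i.val = m - 1) : (negCol m i).val = 0 := by
  simp only [negCol]
  omega

lemma posCol_eq_self_of_val_eq_sub_one (i : Fin m) (hi : i.val = m - 1) : posCol m i = i := by
  simp only [Fin.ext_iff, posCol]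
  omega

end Columns

section RowAction

variable {m : ℕ} {α : ℝ} {β : Fin m → ℝ} {A : Matrix (Fin m) (Fin m) ℝ}

lemma mulVec_apply_eq_of_entries (hm : 2 ≤ m)
    (hA : ∀ i j : Fin m,
      A i j = if j.val = m / 2 - (i.val + 2) / 2 then -α
              else if j.val = m / 2 + (i.val + 2) / 2 - 1 then α * β i
              else 0)
    (v : Fin m → ℝ) (i : Fin m) :
    (A *ᵥ v) i = α * β i * v (posCol m i) - α * v (negCol m i) := by
  have hneg : (negCol m i).val = m / 2 - (i.val + 2) / 2 := rfl
  have hpos : (posCol m i).val = m / 2 + (i.val + 2) / 2 - 1 := rfl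
  have hne := negCol_ne_posCol hm i
  rw [mulVec, dotProduct, Finset.sum_eq_add (negCol m i) (posCol m i) hne]
  · have hpos' : (posCol m i).val ≠ m / 2 - (i.val + 2) / 2 :=
      hneg ▸ fun h => hne (Fin.ext h.symm)
    rw [hA, hA, if_pos hneg, if_neg hpos', if_pos hpos]
    ring
  · rintro j - ⟨hjn, hjp⟩
    rw [hA, if_neg (hneg ▸ fun h => hjn (Fin.ext h)), if_neg (hpos ▸ fun h => hjp (Fin.ext h)),
      zero_mul]
  all_goals simp

lemma mapsTo_mulVec_monotoneCone
    (hAv : ∀ v i, (A *ᵥ v) i = α * β i * v (posCol m i) - α * v (negCol m i))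
    (hα : 0 ≤ α) (hβ1 : ∀ i, 1 ≤ β i) (hβ : Monotone β) :
    MapsTo A.mulVec (monotoneCone (Fin m)) (monotoneCone (Fin m)) := by
  intro v hv
  refine ⟨fun i => ?_, fun i j hij => ?_⟩
  · have h : v (negCol m i) ≤ β i * v (posCol m i) :=
      (hv.2 (negCol_le_posCol i)).trans (le_mul_of_one_le_left (hv.1 _) (hβ1 i))
    rw [Pi.zero_apply, hAv, mul_assoc, ← mul_sub]
    exact mul_nonneg hα (sub_nonneg.2 h)
  · have hp : β i * v (posCol m i) ≤ β j * v (posCol m j) :=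
      mul_le_mul (hβ hij) (hv.2 (posCol_monotone hij)) (hv.1 _) (zero_le_one.trans (hβ1 j))
    have hn : v (negCol m j) ≤ v (negCol m i) := hv.2 (negCol_antitone hij)
    rw [hAv, hAv, mul_assoc, mul_assoc]
    linarith [mul_le_mul_of_nonneg_left hp hα, mul_le_mul_of_nonneg_left hn hα]

lemma mulVec_apply_pos
    (hAv : ∀ v i, (A *ᵥ v) i = α * β i * v (posCol m i) - α * v (negCol m i))
    (hα : 0 < α) {i : Fin m} (hβi : 1 < β i) {w : Fin m → ℝ}
    (hw : Monotone w) (hwi : 0 < w (posCol m i)) : 0 < (A *ᵥ w) i := by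
  rw [hAv, mul_assoc, ← mul_sub]
  exact mul_pos hα (sub_pos.2 ((hw (negCol_le_posCol i)).trans_lt (lt_mul_of_one_lt_left hwi hβi)))

lemma mulVec_strictMono
    (hAv : ∀ v i, (A *ᵥ v) i = α * β i * v (posCol m i) - α * v (negCol m i))
    (hα : 0 < α) (hβ1 : ∀ i, 1 < β i) (hβ : StrictMono β)
    {w : Fin m → ℝ} (hw : Monotone w) (hpos : ∀ i, 0 < w i) : StrictMono (A *ᵥ w) := by
  intro i j hij
  have hp : β i * w (posCol m i) < β j * w (posCol m j) :=
    (mul_le_mul_of_nonneg_left (hw (posCol_monotone hij.le)) (by linarith [hβ1 i])).trans_lt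
      (mul_lt_mul_of_pos_right (hβ hij) (hpos _))
  have hn : w (negCol m j) ≤ w (negCol m i) := hw (negCol_antitone hij.le)
  rw [hAv, hAv, mul_assoc, mul_assoc]
  linarith [mul_lt_mul_of_pos_left hp hα, mul_le_mul_of_nonneg_left hn hα.le]

lemma iterate_mulVec_apply_pos
    (hAv : ∀ v i, (A *ᵥ v) i = α * β i * v (posCol m i) - α * v (negCol m i))
    (hα : 0 < α) (hβ1 : ∀ i, 1 < β i) (hβ : Monotone β) (hm : Even m)
    {v : Fin m → ℝ} (hv : v ∈ monotoneCone (Fin m)) (hvt : ∀ i : Fin m, m ≤ i + 1 → 0 < v i)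
    (k : ℕ) : ∀ i : Fin m, m ≤ i + 2 ^ k → 0 < A.mulVec^[k] v i := by
  have hcone := mapsTo_mulVec_monotoneCone hAv hα.le (fun i => (hβ1 i).le) hβ
  induction k with
  | zero => simpa using hvt
  | succ k ih =>
    intro i hi
    rw [Function.iterate_succ_apply']
    exact mulVec_apply_pos hAv hα (hβ1 i) (hcone.iterate k hv).2 (ih _ (le_posCol_add_pow hm hi))

lemma iterate_mulVec_mem_interior
    (hAv : ∀ v i, (A *ᵥ v) i = α * β i * v (posCol m i) - α * v (negCol m i))
    (hα : 0 < α) (hβ1 : ∀ i, 1 < β i) (hβ : StrictMono β) (hm : Even m) {k : ℕ}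
    (hk : m ≤ 2 ^ k) {v : Fin m → ℝ} (hv : v ∈ monotoneCone (Fin m)) (hv0 : v ≠ 0) :
    A.mulVec^[k + 1] v ∈ interior (monotoneCone (Fin m)) := by
  obtain ⟨j, -⟩ := Function.ne_iff.mp hv0
  obtain ⟨t, ht⟩ : ∃ t : Fin m, t.val = m - 1 := ⟨⟨m - 1, by have := j.isLt; omega⟩, rfl⟩
  have hcone := mapsTo_mulVec_monotoneCone hAv hα.le (fun i => (hβ1 i).le) hβ.monotone
  have hvt : 0 < v t := (hv.1 t).lt_of_ne' fun h =>
    hv0 (eq_zero_of_mem_monotoneCone (fun i => Fin.le_def.2 (by have := i.isLt; omega)) hv h)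
  have hpos : ∀ i, 0 < A.mulVec^[k] v i := fun i =>
    iterate_mulVec_apply_pos hAv hα hβ1 hβ.monotone hm hv
      (fun i hi => (Fin.ext (by have := i.isLt; omega) : t = i) ▸ hvt) k i (by omega)
  have hw : Monotone (A.mulVec^[k] v) := (hcone.iterate k hv).2
  rw [Function.iterate_succ_apply']
  exact setOf_pos_strictMono_subset_interior
    ⟨fun i => mulVec_apply_pos hAv hα (hβ1 i) hw (hpos _), mulVec_strictMono hAv hα hβ1 hβ hw hpos⟩

lemma lt_of_mulVec_eq_smul
    (hAv : ∀ v i, (A *ᵥ v) i = α * β i * v (posCol m i) - α * v (negCol m i))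
    (hα : 0 < α) {b t : Fin m} (hb : b.val = 0) (ht : t.val = m - 1) (hβb : β b < α)
    (hβt : β t = α) {v : Fin m → ℝ} (hv : v ∈ monotoneCone (Fin m)) (hvt : v t = 1) {r : ℝ}
    (hr : A *ᵥ v = r • v) : α * (α - 1) < r := by
  have hr_eq : r = α * α - α * v b := by
    have := congrFun hr t
    have hnt : negCol m t = b := Fin.ext (val_negCol_of_val_eq_sub_one t ht ▸ hb.symm)
    rw [hAv, posCol_eq_self_of_val_eq_sub_one t ht, hnt, hβt, hvt, Pi.smul_apply, hvt,
      smul_eq_mul] at this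
    linarith
  have hvb : v b < 1 := by
    refine ((hv.2 (Fin.le_def.2 (by omega) : b ≤ t)).trans_eq hvt).lt_of_ne fun hvb => ?_
    have hv1 : ∀ i, v i = 1 := fun i =>
      le_antisymm ((hv.2 (Fin.le_def.2 (by omega) : i ≤ t)).trans_eq hvt)
        (hvb ▸ hv.2 (Fin.le_def.2 (by omega) : b ≤ i))
    have := congrFun hr b
    rw [hAv, hv1, hv1, Pi.smul_apply, hv1, smul_eq_mul, hr_eq, hvb] at this
    nlinarith
  rw [hr_eq]
  nlinarith

end RowAction

/-- Let `n ≥ 2`, `m = 2^(n-1)`, `α > 1`, and `1 < β₁ < ⋯ < β_m = α`.  Let `A` be the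
`m × m` matrix whose `i`-th row (`1 ≤ i ≤ m`) has entry `-α` in column `m/2 - ⌈i/2⌉ + 1`,
entry `α·β_i` in column `m/2 + ⌈i/2⌉`, and `0` elsewhere.  (With 0-based indices
`i, j : Fin m`, the ceiling `⌈(i+1)/2⌉` is `(i+2)/2` in natural division, the `-α` column is
`m/2 - (i+2)/2` and the `α·β_i` column is `m/2 + (i+2)/2 - 1`.)
Then `A` has a real eigenvalue `λ > α·(α-1)` with an eigenvector `v` lying in the cone
`CN = {x : 0 ≤ x₁ ≤ ⋯ ≤ x_m}` and normalized by `v_m = 1`. -/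
theorem stmt1 (n m : ℕ) (hn : 2 ≤ n) (hm : m = 2 ^ (n - 1))
    (α : ℝ) (hα : 1 < α)
    (β : Fin m → ℝ)
    (hβ0 : ∀ i : Fin m, i.val = 0 → 1 < β i)
    (hβmono : ∀ i j : Fin m, i < j → β i < β j)
    (hβlast : ∀ i : Fin m, i.val = m - 1 → β i = α)
    (A : Matrix (Fin m) (Fin m) ℝ)
    (hA : ∀ i j : Fin m,
      A i j = if j.val = m / 2 - (i.val + 2) / 2 then -α
              else if j.val = m / 2 + (i.val + 2) / 2 - 1 then α * β i
              else 0) :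
    ∃ lam : ℝ, α * (α - 1) < lam ∧
      ∃ v : Fin m → ℝ,
        (∀ i : Fin m, i.val = m - 1 → v i = 1) ∧
        (∀ i : Fin m, 0 ≤ v i) ∧
        (∀ i j : Fin m, i ≤ j → v i ≤ v j) ∧
        A.mulVec v = lam • v := by
  have hm2 : 2 ≤ m := hm ▸ Nat.le_self_pow (by omega) 2
  have hmeven : Even m := hm ▸ (Nat.even_pow.2 ⟨even_two, by omega⟩)
  obtain ⟨b, hb⟩ : ∃ b : Fin m, b.val = 0 := ⟨⟨0, by omega⟩, rfl⟩
  obtain ⟨t, ht⟩ : ∃ t : Fin m, t.val = m - 1 := ⟨⟨m - 1, by omega⟩, rfl⟩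
  have htop : IsTop t := fun i => Fin.le_def.2 (by omega)
  have hβ : StrictMono β := fun i j => hβmono i j
  have hβ1 : ∀ i, 1 < β i := fun i => (hβ0 b hb).trans_le (hβ.monotone (Fin.le_def.2 (by omega)))
  have hAv := mulVec_apply_eq_of_entries hm2 hA
  set T : (Fin m → ℝ) →L[ℝ] (Fin m → ℝ) := LinearMap.toContinuousLinearMap A.mulVecLin
  have hT : ⇑T = A.mulVec := by ext; simp [T]
  obtain ⟨r, v, hv, hvt, hTv⟩ := exists_eigenvector_mem_of_pow_mapsTo_interior
    isClosed_monotoneCone (fun c hc v hv => smul_mem_monotoneCone hc.le hv)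
    (ContinuousLinearMap.proj t) (fun v hv => hv.1 t)
    (isCompact_monotoneCone_inter_apply_eq_one htop)
    ⟨1, ⟨fun _ => zero_le_one, monotone_const⟩, rfl⟩ T
    (hT ▸ mapsTo_mulVec_monotoneCone hAv (by linarith) (fun i => (hβ1 i).le) hβ.monotone) n
    fun v hv hv0 => by
      rw [FunLike.coe_pow_eq_iterate, hT, (by omega : n = (n - 1) + 1)]
      exact iterate_mulVec_mem_interior hAv (by linarith) hβ1 hβ hmeven hm.le hv hv0
  rw [hT] at hTv
  refine ⟨r, lt_of_mulVec_eq_smul hAv (by linarith) hb ht ?_ (hβlast t ht) hv hvt hTv,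
    v, fun i hi => (Fin.ext (hi.trans ht.symm) : i = t) ▸ hvt, hv.1, fun i j h => hv.2 h, hTv⟩
  exact hβlast t ht ▸ hβ (Fin.lt_def.2 (by omega))
end

section
/- A maps the cone CN into itself: if 0 ≤ x₁ ≤ x₂ ≤ … ≤ x_m, then the vector y = A·x satisfies 0 ≤ y₁ ≤ y₂ ≤ … ≤ y_m. Moreover, if in addition x₁ > 0, then y has strictly positive, strictly increasing coordinates: 0 < y₁ < y₂ < … < y_m. -/
lemma stmt2_aux (m : ℕ) (hme : m % 2 = 0) (hm2 : 2 ≤ m)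
    (α : ℝ) (β : Fin m → ℝ)
    (A : Matrix (Fin m) (Fin m) ℝ)
    (hA : ∀ i j : Fin m,
      A i j = if j.val = m / 2 - (i.val + 2) / 2 then -α
              else if j.val = m / 2 + (i.val + 2) / 2 - 1 then α * β i
              else 0)
    (x : Fin m → ℝ) (i : Fin m) :
    ∃ a b : Fin m, a.val = m / 2 - (i.val + 2) / 2 ∧
      b.val = m / 2 + (i.val + 2) / 2 - 1 ∧
      A.mulVec x i = α * (β i * x b - x a) := by
  classical
  have hv := i.isLt
  refine ⟨⟨m / 2 - (i.val + 2) / 2, by omega⟩, ⟨m / 2 + (i.val + 2) / 2 - 1, by omega⟩,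
    rfl, rfl, ?_⟩
  set a : Fin m := ⟨m / 2 - (i.val + 2) / 2, by omega⟩ with hadef
  set b : Fin m := ⟨m / 2 + (i.val + 2) / 2 - 1, by omega⟩ with hbdef
  have hav : (a : ℕ) = m / 2 - (i.val + 2) / 2 := rfl
  have hbv : (b : ℕ) = m / 2 + (i.val + 2) / 2 - 1 := rfl
  have hne : a ≠ b := by rw [Ne, Fin.ext_iff, hav, hbv]; omega
  have hkey : ∀ j : Fin m, A i j * x j =
      (if j = a then -α * x a else 0) + (if j = b then α * β i * x b else 0) := by
    intro j
    rw [hA]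
    by_cases h1 : (j : ℕ) = m / 2 - (i.val + 2) / 2
    · have hj : j = a := Fin.ext (by rw [h1, hav])
      rw [if_pos h1, if_pos hj, if_neg (by rw [hj]; exact hne), hj, add_zero]
    · by_cases h2 : (j : ℕ) = m / 2 + (i.val + 2) / 2 - 1
      · have hj : j = b := Fin.ext (by rw [h2, hbv])
        have hj1 : ¬ j = a := by intro h; exact h1 (by rw [h])
        rw [if_neg h1, if_pos h2, if_neg hj1, if_pos hj, hj, zero_add]
      · have hj1 : ¬ j = a := by intro h; exact h1 (by rw [h])
        have hj2 : ¬ j = b := by intro h; exact h2 (by rw [h])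
        rw [if_neg h1, if_neg h2, if_neg hj1, if_neg hj2, add_zero, zero_mul]
  have hmv : A.mulVec x i = ∑ j, A i j * x j := rfl
  rw [hmv, Finset.sum_congr rfl (fun j _ => hkey j), Finset.sum_add_distrib,
    Finset.sum_ite_eq' Finset.univ a (fun _ => -α * x a),
    Finset.sum_ite_eq' Finset.univ b (fun _ => α * β i * x b)]
  simp only [Finset.mem_univ, if_true]
  ring

/-- Let `n ≥ 2`, `m = 2^(n-1)`, `α > 1`, and `1 < β₁ < ⋯ < β_m = α`.  Let `A` be the
`m × m` matrix whose `i`-th row (`1 ≤ i ≤ m`) has entry `-α` in column `m/2 - ⌈i/2⌉ + 1`,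
entry `α·β_i` in column `m/2 + ⌈i/2⌉`, and `0` elsewhere (expressed below with 0-based
indices).  Then `A` maps the cone `CN = {x : 0 ≤ x₁ ≤ ⋯ ≤ x_m}` into itself: if
`0 ≤ x₁ ≤ ⋯ ≤ x_m` then `y = A·x` satisfies `0 ≤ y₁ ≤ ⋯ ≤ y_m`.  Moreover if in
addition `x₁ > 0` then `0 < y₁ < y₂ < ⋯ < y_m`. -/
theorem stmt2 (n m : ℕ) (hn : 2 ≤ n) (hm : m = 2 ^ (n - 1))
    (α : ℝ) (hα : 1 < α)
    (β : Fin m → ℝ)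
    (hβ0 : ∀ i : Fin m, i.val = 0 → 1 < β i)
    (hβmono : ∀ i j : Fin m, i < j → β i < β j)
    (hβlast : ∀ i : Fin m, i.val = m - 1 → β i = α)
    (A : Matrix (Fin m) (Fin m) ℝ)
    (hA : ∀ i j : Fin m,
      A i j = if j.val = m / 2 - (i.val + 2) / 2 then -α
              else if j.val = m / 2 + (i.val + 2) / 2 - 1 then α * β i
              else 0)
    (x : Fin m → ℝ)
    (hx_nonneg : ∀ i : Fin m, 0 ≤ x i)
    (hx_mono : ∀ i j : Fin m, i ≤ j → x i ≤ x j) :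
    ((∀ i : Fin m, 0 ≤ A.mulVec x i) ∧
      (∀ i j : Fin m, i ≤ j → A.mulVec x i ≤ A.mulVec x j)) ∧
    ((∀ i : Fin m, i.val = 0 → 0 < x i) →
      (∀ i : Fin m, 0 < A.mulVec x i) ∧
      (∀ i j : Fin m, i < j → A.mulVec x i < A.mulVec x j)) := by
  have hm2 : 2 ≤ m := by
    have : 2 ^ 1 ≤ 2 ^ (n - 1) := Nat.pow_le_pow_right (by norm_num) (by omega)
    omega
  have hme : m % 2 = 0 := by
    have : 2 ∣ 2 ^ (n - 1) := dvd_pow_self 2 (by omega)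
    omega
  have hy := stmt2_aux m hme hm2 α β A hA x
  have hβ1 : ∀ i : Fin m, 1 < β i := by
    intro i
    have h0 : 1 < β ⟨0, by omega⟩ := hβ0 ⟨0, by omega⟩ rfl
    rcases Nat.eq_zero_or_pos i.val with h | h
    · have : i = ⟨0, by omega⟩ := Fin.ext h
      rw [this]; exact h0
    · exact h0.trans (hβmono ⟨0, by omega⟩ i h)
  have hαpos : (0:ℝ) < α := by linarith
  have key_nonneg : ∀ i : Fin m, 0 ≤ A.mulVec x i := by
    intro i
    obtain ⟨a, b, ha, hb, hyi⟩ := hy i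
    rw [hyi]
    have hab : a ≤ b := by rw [Fin.le_def]; have := i.isLt; omega
    have h12 : x a ≤ x b := hx_mono a b hab
    have hb1 := hβ1 i
    have hxa := hx_nonneg a
    have hxb := hx_nonneg b
    nlinarith [mul_nonneg (sub_nonneg.2 hb1.le) hxb]
  have key_le : ∀ i j : Fin m, i ≤ j → A.mulVec x i ≤ A.mulVec x j := by
    intro i j hij
    obtain ⟨a, b, ha, hb, hyi⟩ := hy i
    obtain ⟨c, d, hc, hd, hyj⟩ := hy j
    rw [hyi, hyj]
    have hvij : i.val ≤ j.val := hij
    have hbij : β i ≤ β j := by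
      rcases eq_or_lt_of_le hij with h | h
      · rw [h]
      · exact le_of_lt (hβmono i j h)
    have hca : c ≤ a := by rw [Fin.le_def]; have := i.isLt; have := j.isLt; omega
    have hbd : b ≤ d := by rw [Fin.le_def]; have := i.isLt; have := j.isLt; omega
    have h1 : x c ≤ x a := hx_mono c a hca
    have h2 : x b ≤ x d := hx_mono b d hbd
    have hp : β i * x b ≤ β j * x d :=
      mul_le_mul hbij h2 (hx_nonneg b) (by linarith [hβ1 j])
    have : β i * x b - x a ≤ β j * x d - x c := by linarith
    exact mul_le_mul_of_nonneg_left this hαpos.le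
  refine ⟨⟨key_nonneg, key_le⟩, fun hx0 => ?_⟩
  have hxpos : ∀ i : Fin m, 0 < x i := by
    intro i
    have h0 : 0 < x ⟨0, by omega⟩ := hx0 ⟨0, by omega⟩ rfl
    exact lt_of_lt_of_le h0 (hx_mono _ i (by simp [Fin.le_def]))
  constructor
  · intro i
    obtain ⟨a, b, ha, hb, hyi⟩ := hy i
    rw [hyi]
    have hab : a ≤ b := by rw [Fin.le_def]; have := i.isLt; omega
    have h12 : x a ≤ x b := hx_mono a b hab
    have hb1 := hβ1 i
    have hxa := hxpos a
    have : 0 < β i * x b - x a := by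
      nlinarith [mul_pos (sub_pos.2 hb1) hxa, mul_nonneg (by linarith : (0:ℝ) ≤ β i)
        (sub_nonneg.2 h12)]
    exact mul_pos hαpos this
  · intro i j hij
    obtain ⟨a, b, ha, hb, hyi⟩ := hy i
    obtain ⟨c, d, hc, hd, hyj⟩ := hy j
    rw [hyi, hyj]
    have hvij : i.val < j.val := hij
    have hbij : β i < β j := hβmono i j hij
    have hca : c ≤ a := by rw [Fin.le_def]; have := i.isLt; have := j.isLt; omega
    have hbd : b ≤ d := by rw [Fin.le_def]; have := i.isLt; have := j.isLt; omega
    have h1 : x c ≤ x a := hx_mono c a hca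
    have h2 : x b ≤ x d := hx_mono b d hbd
    have hxb := hxpos b
    have hp : β i * x b < β j * x d := by
      nlinarith [mul_pos (sub_pos.2 hbij) hxb,
        mul_nonneg (by linarith [hβ1 j] : (0:ℝ) ≤ β j) (sub_nonneg.2 h2)]
    have : β i * x b - x a < β j * x d - x c := by linarith
    exact mul_lt_mul_of_pos_left this hαpos
end

section
/- The cone CN contains exactly one direction preserved by A: if v, w ∈ CN are nonzero vectors satisfying A·v = λ·v and A·w = μ·w for some real numbers λ, μ, then λ = μ and w = c·v for some real c > 0. -/
def ConeM {m : ℕ} (x : Fin m → ℝ) : Prop :=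
  (∀ i, 0 ≤ x i) ∧ ∀ i j : Fin m, i ≤ j → x i ≤ x j

def PosM {m : ℕ} (x : Fin m → ℝ) : Prop :=
  (∀ i, 0 < x i) ∧ ∀ i j : Fin m, i < j → x i < x j

def col1 {m : ℕ} (i : Fin m) : Fin m :=
  ⟨m / 2 - ((i : ℕ) + 2) / 2, by have := i.isLt; omega⟩

def col2 {m : ℕ} (i : Fin m) : Fin m :=
  ⟨m / 2 + ((i : ℕ) + 2) / 2 - 1, by have := i.isLt; omega⟩

lemma le_of_adj {m : ℕ} {x : Fin m → ℝ}
    (h : ∀ i : ℕ, ∀ hi : i + 1 < m, x ⟨i, by omega⟩ ≤ x ⟨i + 1, hi⟩) :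
    ∀ i j : Fin m, i ≤ j → x i ≤ x j := by
  have H : ∀ d : ℕ, ∀ i : ℕ, ∀ hid : i + d < m, x ⟨i, by omega⟩ ≤ x ⟨i + d, hid⟩ := by
    intro d
    induction d with
    | zero => intro i hid; exact le_refl _
    | succ d ih => intro i hid; exact le_trans (ih i (by omega)) (h (i + d) (by omega))
  intro i j hij
  have hij' : (i : ℕ) ≤ (j : ℕ) := hij
  have h2 := H ((j : ℕ) - (i : ℕ)) (i : ℕ) (by omega)
  have he : (⟨(i : ℕ) + ((j : ℕ) - (i : ℕ)), by omega⟩ : Fin m) = j := by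
    apply Fin.ext; simp; omega
  rw [he] at h2
  exact h2

lemma lt_of_adj {m : ℕ} {x : Fin m → ℝ}
    (h : ∀ i : ℕ, ∀ hi : i + 1 < m, x ⟨i, by omega⟩ < x ⟨i + 1, hi⟩) :
    ∀ i j : Fin m, i < j → x i < x j := by
  intro i j hij
  have hij' : (i : ℕ) < (j : ℕ) := hij
  have hj : (j : ℕ) - 1 + 1 < m := by have := j.isLt; omega
  have h1 : x i ≤ x ⟨(j : ℕ) - 1, by omega⟩ := by
    refine le_of_adj (fun a ha => (h a ha).le) i ⟨(j : ℕ) - 1, by omega⟩ ?_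
    rw [Fin.le_def]; simp; omega
  have h2 := h ((j : ℕ) - 1) hj
  have he : (⟨(j : ℕ) - 1 + 1, hj⟩ : Fin m) = j := by apply Fin.ext; simp; omega
  rw [he] at h2
  exact lt_of_le_of_lt h1 h2

lemma rowFormula {m : ℕ} {α : ℝ} {β : Fin m → ℝ} {A : Matrix (Fin m) (Fin m) ℝ}
    (hA : ∀ i j : Fin m,
      A i j = if (j : ℕ) = m / 2 - ((i : ℕ) + 2) / 2 then -α
              else if (j : ℕ) = m / 2 + ((i : ℕ) + 2) / 2 - 1 then α * β i
              else 0)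
    (hme : 2 ∣ m) (x : Fin m → ℝ) (i : Fin m) :
    A.mulVec x i = α * β i * x (col2 i) - α * x (col1 i) := by
  have him := i.isLt
  have hne : ((col1 i : Fin m) : ℕ) ≠ ((col2 i : Fin m) : ℕ) := by
    simp only [col1, col2]; omega
  have hsum : A.mulVec x i = ∑ j : Fin m, A i j * x j := by
    simp [Matrix.mulVec, dotProduct]
  rw [hsum]
  have hterm : ∀ j : Fin m, A i j * x j =
      (if col1 i = j then -α * x j else 0) + (if col2 i = j then α * β i * x j else 0) := by
    intro j
    rw [hA i j]
    by_cases h1 : (j : ℕ) = m / 2 - ((i : ℕ) + 2) / 2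
    · have e1 : col1 i = j := by apply Fin.ext; simpa [col1] using h1.symm
      have e2 : ¬ (col2 i = j) := by
        intro hcon
        exact hne (congrArg Fin.val (e1.trans hcon.symm))
      rw [if_pos h1, if_pos e1, if_neg e2]; ring
    · have e1 : ¬ (col1 i = j) := by
        intro hcon; exact h1 (by rw [← hcon]; rfl)
      by_cases h2 : (j : ℕ) = m / 2 + ((i : ℕ) + 2) / 2 - 1
      · have e2 : col2 i = j := by apply Fin.ext; simpa [col2] using h2.symm
        rw [if_neg h1, if_pos h2, if_neg e1, if_pos e2]; ring
      · have e2 : ¬ (col2 i = j) := by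
          intro hcon; exact h2 (by rw [← hcon]; rfl)
        rw [if_neg h1, if_neg h2, if_neg e1, if_neg e2]; ring
  rw [Finset.sum_congr rfl (fun j _ => hterm j), Finset.sum_add_distrib,
    Finset.sum_ite_eq, Finset.sum_ite_eq]
  simp only [Finset.mem_univ, if_true]
  ring

section Main

variable {m : ℕ} {α : ℝ} {β : Fin m → ℝ} {A : Matrix (Fin m) (Fin m) ℝ}

lemma gap_le
    (hA : ∀ i j : Fin m,
      A i j = if (j : ℕ) = m / 2 - ((i : ℕ) + 2) / 2 then -α
              else if (j : ℕ) = m / 2 + ((i : ℕ) + 2) / 2 - 1 then α * β i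
              else 0)
    (hme : 2 ∣ m) (hα : 1 < α) (hβ1 : ∀ i, 1 < β i)
    (x : Fin m → ℝ) (hx : ConeM x) (i : ℕ) (hi : i + 1 < m) :
    α * (β ⟨i + 1, hi⟩ - β ⟨i, by omega⟩) * x (col2 ⟨i, by omega⟩)
      ≤ A.mulVec x ⟨i + 1, hi⟩ - A.mulVec x ⟨i, by omega⟩ := by
  rw [rowFormula hA hme, rowFormula hA hme]
  rcases Nat.even_or_odd i with ⟨t, rfl⟩ | ⟨t, rfl⟩
  · have e2 : col2 (⟨t + t + 1, hi⟩ : Fin m) = col2 ⟨t + t, by omega⟩ := by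
      apply Fin.ext; simp only [col2]; omega
    have e1 : col1 (⟨t + t + 1, hi⟩ : Fin m) = col1 ⟨t + t, by omega⟩ := by
      apply Fin.ext; simp only [col1]; omega
    rw [e1, e2]; apply le_of_eq; ring
  · have hα0 : (0:ℝ) ≤ α := by linarith
    have hc2 : (col2 (⟨2 * t + 1, by omega⟩ : Fin m)) ≤ col2 ⟨2 * t + 1 + 1, hi⟩ := by
      rw [Fin.le_def]; simp only [col2]; omega
    have hc1 : (col1 (⟨2 * t + 1 + 1, hi⟩ : Fin m)) ≤ col1 ⟨2 * t + 1, by omega⟩ := by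
      rw [Fin.le_def]; simp only [col1]; omega
    have t1 : 0 ≤ β ⟨2 * t + 1 + 1, hi⟩ *
        (x (col2 ⟨2 * t + 1 + 1, hi⟩) - x (col2 ⟨2 * t + 1, by omega⟩)) := by
      have := hx.2 _ _ hc2
      have := hβ1 (⟨2 * t + 1 + 1, hi⟩ : Fin m)
      nlinarith
    have t2 : 0 ≤ x (col1 ⟨2 * t + 1, by omega⟩) - x (col1 ⟨2 * t + 1 + 1, hi⟩) := by
      have := hx.2 _ _ hc1; linarith
    nlinarith [mul_nonneg hα0 t1, mul_nonneg hα0 t2]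

lemma claimB
    (hA : ∀ i j : Fin m,
      A i j = if (j : ℕ) = m / 2 - ((i : ℕ) + 2) / 2 then -α
              else if (j : ℕ) = m / 2 + ((i : ℕ) + 2) / 2 - 1 then α * β i
              else 0)
    (hme : 2 ∣ m) (hα : 1 < α) (hβ1 : ∀ i, 1 < β i)
    (x : Fin m → ℝ) (hx : ConeM x) (J : Fin m) (hJ : m / 2 ≤ (J : ℕ)) :
    α * (β ⟨2 * (J : ℕ) - m, by have := J.isLt; omega⟩ - 1) * x J
      ≤ A.mulVec x ⟨2 * (J : ℕ) - m, by have := J.isLt; omega⟩ := by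
  have hJm := J.isLt
  rw [rowFormula hA hme]
  set J' : Fin m := ⟨2 * (J : ℕ) - m, by omega⟩ with hJ'
  have e2 : col2 J' = J := by apply Fin.ext; simp only [col2, hJ']; omega
  have hc1 : col1 J' ≤ J := by rw [Fin.le_def]; simp only [col1, hJ']; omega
  have hx1 : x (col1 J') ≤ x J := hx.2 _ _ hc1
  have hα0 : (0:ℝ) ≤ α := by linarith
  rw [e2]
  nlinarith [mul_nonneg hα0 (sub_nonneg.mpr hx1), hβ1 (⟨2 * (J : ℕ) - m, by omega⟩ : Fin m), hx.1 J]


variable (hA : ∀ i j : Fin m,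
      A i j = if (j : ℕ) = m / 2 - ((i : ℕ) + 2) / 2 then -α
              else if (j : ℕ) = m / 2 + ((i : ℕ) + 2) / 2 - 1 then α * β i
              else 0)
    (hme : 2 ∣ m) (hm2 : 2 ≤ m) (hα : 1 < α) (hβ1 : ∀ i, 1 < β i)
    (hβmono : ∀ i j : Fin m, i < j → β i < β j)

include hA hme hm2 hα hβ1 hβmono

lemma coneA (x : Fin m → ℝ) (hx : ConeM x) : ConeM (A.mulVec x) := by
  have hadj : ∀ i : ℕ, ∀ hi : i + 1 < m,
      A.mulVec x ⟨i, by omega⟩ ≤ A.mulVec x ⟨i + 1, hi⟩ := by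
    intro i hi
    have hg := gap_le hA hme hα hβ1 x hx i hi
    have hb : β (⟨i, by omega⟩ : Fin m) ≤ β ⟨i + 1, hi⟩ := by
      apply le_of_lt; apply hβmono; simp [Fin.lt_def]
    have hx2 : 0 ≤ x (col2 ⟨i, by omega⟩) := hx.1 _
    have h3 : 0 ≤ α * (β ⟨i + 1, hi⟩ - β ⟨i, by omega⟩) * x (col2 ⟨i, by omega⟩) :=
      mul_nonneg (mul_nonneg (by linarith) (by linarith)) hx2
    linarith
  have hmono := le_of_adj hadj
  have h0 : 0 ≤ A.mulVec x ⟨0, by omega⟩ := by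
    have hB := claimB hA hme hα hβ1 x hx ⟨m / 2, by omega⟩ (by simp)
    have he : (⟨2 * ((⟨m / 2, by omega⟩ : Fin m) : ℕ) - m, by omega⟩ : Fin m)
        = ⟨0, by omega⟩ := by apply Fin.ext; simp; omega
    rw [he] at hB
    have hb := hβ1 (⟨0, by omega⟩ : Fin m)
    have hx2 : 0 ≤ x ⟨m / 2, by omega⟩ := hx.1 _
    have h3 : 0 ≤ α * (β ⟨0, by omega⟩ - 1) * x ⟨m / 2, by omega⟩ :=
      mul_nonneg (mul_nonneg (by linarith) (by linarith)) hx2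
    linarith
  refine ⟨fun i => ?_, hmono⟩
  calc (0:ℝ) ≤ A.mulVec x ⟨0, by omega⟩ := h0
  _ ≤ A.mulVec x i := hmono _ _ (by simp [Fin.le_def])

lemma posA (x : Fin m → ℝ) (hx : ConeM x) (hpos : 0 < x ⟨m / 2, by omega⟩) :
    PosM (A.mulVec x) := by
  have hadj : ∀ i : ℕ, ∀ hi : i + 1 < m,
      A.mulVec x ⟨i, by omega⟩ < A.mulVec x ⟨i + 1, hi⟩ := by
    intro i hi
    have hg := gap_le hA hme hα hβ1 x hx i hi
    have hb : β (⟨i, by omega⟩ : Fin m) < β ⟨i + 1, hi⟩ := by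
      apply hβmono; simp [Fin.lt_def]
    have hx2 : 0 < x (col2 ⟨i, by omega⟩) := by
      calc (0:ℝ) < x ⟨m / 2, by omega⟩ := hpos
      _ ≤ x (col2 ⟨i, by omega⟩) := by
          apply hx.2; simp only [Fin.le_def, col2]; omega
    have h3 : 0 < α * (β ⟨i + 1, hi⟩ - β ⟨i, by omega⟩) * x (col2 ⟨i, by omega⟩) :=
      mul_pos (mul_pos (by linarith) (by linarith)) hx2
    linarith
  have hsm := lt_of_adj hadj
  have h0 : 0 < A.mulVec x ⟨0, by omega⟩ := by
    have hB := claimB hA hme hα hβ1 x hx ⟨m / 2, by omega⟩ (by simp)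
    have he : (⟨2 * ((⟨m / 2, by omega⟩ : Fin m) : ℕ) - m, by omega⟩ : Fin m)
        = ⟨0, by omega⟩ := by apply Fin.ext; simp; omega
    rw [he] at hB
    have hb := hβ1 (⟨0, by omega⟩ : Fin m)
    have h3 : 0 < α * (β ⟨0, by omega⟩ - 1) * x ⟨m / 2, by omega⟩ :=
      mul_pos (mul_pos (by linarith) (by linarith)) hpos
    linarith
  refine ⟨fun i => ?_, hsm⟩
  rcases Nat.eq_zero_or_pos (i : ℕ) with h | h
  · have : i = ⟨0, by omega⟩ := by apply Fin.ext; simp [h]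
    rw [this]; exact h0
  · calc (0:ℝ) < A.mulVec x ⟨0, by omega⟩ := h0
    _ < A.mulVec x i := hsm _ _ (by simp [Fin.lt_def]; omega)

lemma exists_pos (x : Fin m → ℝ) (hx : ConeM x) (hxne : x ≠ 0) :
    ∃ k : ℕ, PosM ((A.mulVec)^[k] x) := by
  obtain ⟨i0, hi0⟩ : ∃ i, x i ≠ 0 := Function.ne_iff.mp hxne
  have hxi0 : 0 < x i0 := lt_of_le_of_ne (hx.1 i0) (Ne.symm hi0)
  have main : ∀ J : ℕ, ∀ hJ : J < m, ∀ y : Fin m → ℝ, ConeM y → 0 < y ⟨J, hJ⟩ →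
      ∃ k : ℕ, PosM ((A.mulVec)^[k] y) := by
    intro J
    induction J using Nat.strong_induction_on with
    | _ J ih =>
      intro hJ y hy hyJ
      by_cases hc : 0 < y ⟨m / 2, by omega⟩
      · exact ⟨1, by rw [Function.iterate_one]; exact posA hA hme hm2 hα hβ1 hβmono y hy hc⟩
      · have hJhalf : m / 2 < J := by
          by_contra hcon
          exact hc (lt_of_lt_of_le hyJ (hy.2 _ _ (by simp [Fin.le_def]; omega)))
        have hB := claimB hA hme hα hβ1 y hy ⟨J, hJ⟩ (by simpa using hJhalf.le)
        have hJ' : 2 * J - m < m := by omega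
        have hyJ' : 0 < A.mulVec y ⟨2 * J - m, hJ'⟩ := by
          have hb := hβ1 (⟨2 * J - m, hJ'⟩ : Fin m)
          have h3 : 0 < α * (β (⟨2 * J - m, hJ'⟩ : Fin m) - 1) * y ⟨J, hJ⟩ :=
            mul_pos (mul_pos (by linarith) (by linarith)) hyJ
          linarith
        obtain ⟨k, hk⟩ := ih (2 * J - m) (by omega) hJ' (A.mulVec y)
          (coneA hA hme hm2 hα hβ1 hβmono y hy) hyJ'
        exact ⟨k + 1, by rw [Function.iterate_succ_apply]; exact hk⟩
  exact main (i0 : ℕ) i0.isLt x hx hxi0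

end Main

def gapf {m : ℕ} (x : Fin m → ℝ) (i : Fin m) : ℝ :=
  if (i : ℕ) = 0 then x i else x i - x ⟨(i : ℕ) - 1, by have := i.isLt; omega⟩

lemma gapf_pos {m : ℕ} {x : Fin m → ℝ} (hx : PosM x) (i : Fin m) : 0 < gapf x i := by
  unfold gapf
  split
  · exact hx.1 i
  · have : x ⟨(i : ℕ) - 1, by have := i.isLt; omega⟩ < x i := by
      apply hx.2; simp [Fin.lt_def]; omega
    linarith

lemma cone_of_gapf {m : ℕ} {x : Fin m → ℝ} (h : ∀ i, 0 ≤ gapf x i) : ConeM x := by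
  have hadj : ∀ i : ℕ, ∀ hi : i + 1 < m, x ⟨i, by omega⟩ ≤ x ⟨i + 1, hi⟩ := by
    intro i hi
    have := h ⟨i + 1, hi⟩
    unfold gapf at this
    simp only [Fin.val_mk] at this
    rw [if_neg (by omega)] at this
    have he : (⟨i + 1 - 1, by omega⟩ : Fin m) = ⟨i, by omega⟩ := by
      apply Fin.ext; simp
    rw [he] at this
    linarith
  have hmono := le_of_adj hadj
  refine ⟨fun i => ?_, hmono⟩
  have h0 : (0:ℝ) ≤ x ⟨0, by have := i.isLt; omega⟩ := by
    have := h ⟨0, by have := i.isLt; omega⟩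
    unfold gapf at this
    rwa [if_pos rfl] at this
  calc (0:ℝ) ≤ x ⟨0, by have := i.isLt; omega⟩ := h0
  _ ≤ x i := hmono _ _ (by simp [Fin.le_def])

lemma gapf_lin {m : ℕ} (x y : Fin m → ℝ) (a b : ℝ) (i : Fin m) :
    gapf (a • x - b • y) i = a * gapf x i - b * gapf y i := by
  unfold gapf
  split <;> simp [Pi.sub_apply, Pi.smul_apply, smul_eq_mul] <;> ring

lemma posM_smul {m : ℕ} {c : ℝ} (hc : 0 < c) {x : Fin m → ℝ} (h : PosM (c • x)) : PosM x := by
  constructor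
  · intro i
    have := h.1 i
    simp only [Pi.smul_apply, smul_eq_mul] at this
    nlinarith
  · intro i j hij
    have := h.2 i j hij
    simp only [Pi.smul_apply, smul_eq_mul] at this
    nlinarith

section Key

variable {m : ℕ} {α : ℝ} {β : Fin m → ℝ} {A : Matrix (Fin m) (Fin m) ℝ}
    (hA : ∀ i j : Fin m,
      A i j = if (j : ℕ) = m / 2 - ((i : ℕ) + 2) / 2 then -α
              else if (j : ℕ) = m / 2 + ((i : ℕ) + 2) / 2 - 1 then α * β i
              else 0)
    (hme : 2 ∣ m) (hm2 : 2 ≤ m) (hα : 1 < α) (hβ1 : ∀ i, 1 < β i)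
    (hβmono : ∀ i j : Fin m, i < j → β i < β j)
    (hβlast : ∀ i : Fin m, (i : ℕ) = m - 1 → β i = α)

include hA hme hm2 hα hβ1 hβmono hβlast

lemma eig_pos (x : Fin m → ℝ) (c : ℝ) (hx : ConeM x) (hxne : x ≠ 0)
    (heig : A.mulVec x = c • x) :
    0 < c ∧ 0 < x ⟨m - 1, by omega⟩ := by
  set L : Fin m := ⟨m - 1, by omega⟩ with hL
  have hxL : 0 < x L := by
    obtain ⟨i0, hi0⟩ : ∃ i, x i ≠ 0 := Function.ne_iff.mp hxne
    have hxi0 : 0 < x i0 := lt_of_le_of_ne (hx.1 i0) (Ne.symm hi0)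
    calc (0:ℝ) < x i0 := hxi0
    _ ≤ x L := hx.2 _ _ (by have := i0.isLt; simp [Fin.le_def, hL]; omega)
  have hrow := rowFormula hA hme x L
  have hvrow : c * x L = α * β L * x (col2 L) - α * x (col1 L) := by
    have := congrFun heig L
    simp only [Pi.smul_apply, smul_eq_mul] at this
    rw [← this, hrow]
  have hβL : β L = α := hβlast L rfl
  have hc2 : col2 L = L := by apply Fin.ext; simp only [col2, hL]; omega
  rw [hβL, hc2] at hvrow
  have hc1le : x (col1 L) ≤ x L := hx.2 _ _ (by simp [Fin.le_def, hL]; omega)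
  have hα0 : (0:ℝ) < α := by linarith
  have h1 : α * (α - 1) * x L ≤ c * x L := by nlinarith [mul_le_mul_of_nonneg_left hc1le hα0.le]
  have h2 : 0 < α * (α - 1) * x L := mul_pos (mul_pos hα0 (by linarith)) hxL
  refine ⟨?_, hxL⟩
  by_contra hcon
  push_neg at hcon
  nlinarith [mul_nonneg (neg_nonneg.mpr hcon) hxL.le]

lemma eig_posM (x : Fin m → ℝ) (c : ℝ) (hx : ConeM x) (hxne : x ≠ 0)
    (heig : A.mulVec x = c • x) (hc : 0 < c) : PosM x := by
  have hit : ∀ k : ℕ, (A.mulVec)^[k] x = c ^ k • x := by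
    intro k
    induction k with
    | zero => simp
    | succ k ih =>
      rw [Function.iterate_succ_apply', ih, Matrix.mulVec_smul, heig, smul_smul, ← pow_succ]
  obtain ⟨k, hk⟩ := exists_pos hA hme hm2 hα hβ1 hβmono x hx hxne
  rw [hit k] at hk
  exact posM_smul (pow_pos hc k) hk

lemma key (v w : Fin m → ℝ) (lam mu : ℝ)
    (hvC : ConeM v) (hv_ne : v ≠ 0) (hwC : ConeM w) (hw_ne : w ≠ 0)
    (hv : A.mulVec v = lam • v) (hw : A.mulVec w = mu • w) (hlm : lam ≤ mu) :
    lam = mu ∧ ∃ c : ℝ, 0 < c ∧ v = c • w := by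
  obtain ⟨hlam, hvL⟩ := eig_pos hA hme hm2 hα hβ1 hβmono hβlast v lam hvC hv_ne hv
  obtain ⟨hmu, hwL⟩ := eig_pos hA hme hm2 hα hβ1 hβmono hβlast w mu hwC hw_ne hw
  have hPv : PosM v := eig_posM hA hme hm2 hα hβ1 hβmono hβlast v lam hvC hv_ne hv hlam
  have hPw : PosM w := eig_posM hA hme hm2 hα hβ1 hβmono hβlast w mu hwC hw_ne hw hmu
  have hne0 : (Finset.univ : Finset (Fin m)).Nonempty := ⟨⟨0, by omega⟩, Finset.mem_univ _⟩
  set f : Fin m → ℝ := fun i => gapf v i / gapf w i with hf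
  set cstar : ℝ := Finset.univ.inf' hne0 f with hcstar
  have hcpos : 0 < cstar :=
    (Finset.lt_inf'_iff hne0).mpr (fun i _ => div_pos (gapf_pos hPv i) (gapf_pos hPw i))
  obtain ⟨i0, -, hi0⟩ := Finset.exists_mem_eq_inf' hne0 f
  have hgv : gapf v i0 = cstar * gapf w i0 :=
    (div_eq_iff (gapf_pos hPw i0).ne').mp hi0.symm
  have hle : ∀ i, cstar * gapf w i ≤ gapf v i := by
    intro i
    have h1 : cstar ≤ f i := Finset.inf'_le f (Finset.mem_univ i)
    rw [hf] at h1
    exact (le_div_iff₀ (gapf_pos hPw i)).mp h1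
  have hu : ∀ i, gapf (v - cstar • w) i = gapf v i - cstar * gapf w i := by
    intro i
    have := gapf_lin v w 1 cstar i
    simpa using this
  have hConeU : ConeM (v - cstar • w) := cone_of_gapf (fun i => by rw [hu]; linarith [hle i])
  by_cases hu0 : v - cstar • w = 0
  · have hvw : v = cstar • w := sub_eq_zero.mp hu0
    have hlm2 : lam • v = mu • v := by
      calc lam • v = A.mulVec v := hv.symm
      _ = A.mulVec (cstar • w) := by rw [← hvw]
      _ = cstar • A.mulVec w := Matrix.mulVec_smul A cstar w
      _ = cstar • (mu • w) := by rw [hw]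
      _ = mu • (cstar • w) := by rw [smul_smul, smul_smul, mul_comm]
      _ = mu • v := by rw [← hvw]
    have : lam * v ⟨m - 1, by omega⟩ = mu * v ⟨m - 1, by omega⟩ := by
      have := congrFun hlm2 ⟨m - 1, by omega⟩
      simpa using this
    exact ⟨mul_right_cancel₀ hvL.ne' this, cstar, hcpos, hvw⟩
  · exfalso
    obtain ⟨k, hk⟩ := exists_pos hA hme hm2 hα hβ1 hβmono (v - cstar • w) hConeU hu0
    have hit : ∀ k : ℕ, (A.mulVec)^[k] (v - cstar • w)
        = lam ^ k • v - (cstar * mu ^ k) • w := by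
      intro k
      induction k with
      | zero => simp
      | succ k ih =>
        rw [Function.iterate_succ_apply', ih, Matrix.mulVec_sub, Matrix.mulVec_smul,
          Matrix.mulVec_smul, hv, hw, smul_smul, smul_smul, ← pow_succ,
          show cstar * mu ^ k * mu = cstar * mu ^ (k + 1) by rw [pow_succ]; ring]
    rw [hit k] at hk
    have hz : 0 < gapf (lam ^ k • v - (cstar * mu ^ k) • w) i0 := gapf_pos hk i0
    rw [gapf_lin, hgv] at hz
    have hpow : lam ^ k ≤ mu ^ k := pow_le_pow_left₀ hlam.le hlm k
    nlinarith [mul_nonneg (mul_pos hcpos (gapf_pos hPw i0)).le (sub_nonneg.mpr hpow)]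

end Key

/-- Let `n ≥ 2`, `m = 2^(n-1)`, `α > 1`, and `1 < β₁ < ⋯ < β_m = α`.  Let `A` be the
`m × m` matrix whose `i`-th row (`1 ≤ i ≤ m`) has entry `-α` in column `m/2 - ⌈i/2⌉ + 1`,
entry `α·β_i` in column `m/2 + ⌈i/2⌉`, and `0` elsewhere (expressed below with 0-based
indices).  The cone `CN = {x : 0 ≤ x₁ ≤ ⋯ ≤ x_m}` contains exactly one direction
preserved by `A`: if `v, w ∈ CN` are nonzero with `A·v = λ·v` and `A·w = μ·w`, then
`λ = μ` and `w = c·v` for some `c > 0`. -/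
theorem stmt3 (n m : ℕ) (hn : 2 ≤ n) (hm : m = 2 ^ (n - 1))
    (α : ℝ) (hα : 1 < α)
    (β : Fin m → ℝ)
    (hβ0 : ∀ i : Fin m, i.val = 0 → 1 < β i)
    (hβmono : ∀ i j : Fin m, i < j → β i < β j)
    (hβlast : ∀ i : Fin m, i.val = m - 1 → β i = α)
    (A : Matrix (Fin m) (Fin m) ℝ)
    (hA : ∀ i j : Fin m,
      A i j = if j.val = m / 2 - (i.val + 2) / 2 then -α
              else if j.val = m / 2 + (i.val + 2) / 2 - 1 then α * β i
              else 0)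
    (v w : Fin m → ℝ) (lam mu : ℝ)
    (hv_nonneg : ∀ i : Fin m, 0 ≤ v i)
    (hv_mono : ∀ i j : Fin m, i ≤ j → v i ≤ v j)
    (hv_ne : v ≠ 0)
    (hw_nonneg : ∀ i : Fin m, 0 ≤ w i)
    (hw_mono : ∀ i j : Fin m, i ≤ j → w i ≤ w j)
    (hw_ne : w ≠ 0)
    (hv : A.mulVec v = lam • v)
    (hw : A.mulVec w = mu • w) :
    lam = mu ∧ ∃ c : ℝ, 0 < c ∧ w = c • v := by
  have hm2 : 2 ≤ m := by
    rw [hm]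
    calc 2 = 2 ^ 1 := rfl
    _ ≤ 2 ^ (n - 1) := Nat.pow_le_pow_right (by omega) (by omega)
  have hme : 2 ∣ m := by
    rw [hm]
    exact dvd_pow_self 2 (by omega)
  have hβ1 : ∀ i : Fin m, 1 < β i := by
    intro i
    rcases Nat.eq_zero_or_pos (i : ℕ) with h | h
    · exact hβ0 i h
    · calc (1:ℝ) < β ⟨0, by omega⟩ := hβ0 _ rfl
      _ < β i := hβmono _ _ (by simp [Fin.lt_def]; omega)
  have hvC : ConeM v := ⟨hv_nonneg, hv_mono⟩
  have hwC : ConeM w := ⟨hw_nonneg, hw_mono⟩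
  rcases le_total lam mu with hlm | hlm
  · obtain ⟨heq, c, hc, hvw⟩ :=
      key hA hme hm2 hα hβ1 hβmono hβlast v w lam mu hvC hv_ne hwC hw_ne hv hw hlm
    refine ⟨heq, c⁻¹, inv_pos.mpr hc, ?_⟩
    rw [hvw, smul_smul, inv_mul_cancel₀ hc.ne', one_smul]
  · obtain ⟨heq, c, hc, hwv⟩ :=
      key hA hme hm2 hα hβ1 hβmono hβlast w v mu lam hwC hw_ne hvC hv_ne hw hv hlm
    exact ⟨heq.symm, c, hc, hwv⟩
end

section
/- For every integer n ≥ 0 such that λ_{n,t} ≠ λ_{k,t} for all integers 0 ≤ k < n, there exists a polynomial p with complex coefficients of degree exactly n such that (L p)(z) = λ_{n,t}·p(z) for all z ∈ ℂ; in particular every such λ_{n,t} is an eigenvalue of L. For n = 1 one has λ_{1,t} = 2 independently of t. -/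
open Polynomial

namespace Stmt4Aux

noncomputable def T (A B c₀ c₁ : ℂ) (p : Polynomial ℂ) : Polynomial ℂ :=
  A • p.comp (C A⁻¹ * X + C c₀) + B • p.comp (C B⁻¹ * X + C c₁)

noncomputable def lamAB (A B : ℂ) (m : ℕ) : ℂ := B ^ (1 - (m:ℤ)) + A ^ (1 - (m:ℤ))

variable {A B c₀ c₁ : ℂ}

lemma T_add (p q : Polynomial ℂ) :
    T A B c₀ c₁ (p + q) = T A B c₀ c₁ p + T A B c₀ c₁ q := by
  simp only [T, add_comp, smul_add]; module

lemma T_smul (e : ℂ) (p : Polynomial ℂ) :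
    T A B c₀ c₁ (e • p) = e • T A B c₀ c₁ p := by
  simp only [T, smul_comp, smul_add, smul_smul, mul_comm]

lemma T_zero : T A B c₀ c₁ 0 = 0 := by simp [T]

lemma comp_lin_ne_zero (hu : A ≠ 0) {p : Polynomial ℂ} (hp : p ≠ 0) (c : ℂ) :
    p.comp (C A⁻¹ * X + C c) ≠ 0 := by
  intro h
  rcases comp_eq_zero_iff.mp h with h' | ⟨-, h'⟩
  · exact hp h'
  · have := congrArg natDegree h'
    rw [natDegree_linear (inv_ne_zero hu), natDegree_C] at this
    exact one_ne_zero this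

lemma degree_comp_lin (hu : A ≠ 0) (p : Polynomial ℂ) (c : ℂ) :
    (p.comp (C A⁻¹ * X + C c)).degree = p.degree := by
  rcases eq_or_ne p 0 with rfl | hp
  · simp
  rw [degree_eq_natDegree (comp_lin_ne_zero hu hp c), degree_eq_natDegree hp,
    natDegree_comp, natDegree_linear (inv_ne_zero hu), mul_one]

lemma natDegree_comp_lin (hu : A ≠ 0) (p : Polynomial ℂ) (c : ℂ) :
    (p.comp (C A⁻¹ * X + C c)).natDegree = p.natDegree := by
  rw [natDegree_comp, natDegree_linear (inv_ne_zero hu), mul_one]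

lemma coeff_comp_lin (hu : A ≠ 0) (p : Polynomial ℂ) (c : ℂ) :
    (p.comp (C A⁻¹ * X + C c)).coeff p.natDegree = p.leadingCoeff * A⁻¹ ^ p.natDegree := by
  have h1 : (p.comp (C A⁻¹ * X + C c)).coeff p.natDegree
      = (p.comp (C A⁻¹ * X + C c)).leadingCoeff := by
    rw [leadingCoeff, natDegree_comp_lin hu]
  rw [h1, Polynomial.leadingCoeff_comp
    (by rw [natDegree_linear (inv_ne_zero hu)]; exact one_ne_zero),
    leadingCoeff_linear (inv_ne_zero hu)]

lemma degree_T_le (hA : A ≠ 0) (hB : B ≠ 0) (p : Polynomial ℂ) :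
    (T A B c₀ c₁ p).degree ≤ p.degree := by
  refine (degree_add_le _ _).trans (max_le ((degree_smul_le _ _).trans ?_)
    ((degree_smul_le _ _).trans ?_))
  · exact le_of_eq (degree_comp_lin hA p c₀)
  · exact le_of_eq (degree_comp_lin hB p c₁)

lemma zpow_aux {u : ℂ} (hu : u ≠ 0) (d : ℕ) : u * u⁻¹ ^ d = u ^ (1 - (d : ℤ)) := by
  rw [sub_eq_add_neg, zpow_add₀ hu, zpow_one, zpow_neg, zpow_natCast, inv_pow]

lemma coeff_T (hA : A ≠ 0) (hB : B ≠ 0) (p : Polynomial ℂ) :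
    (T A B c₀ c₁ p).coeff p.natDegree = lamAB A B p.natDegree * p.leadingCoeff := by
  simp only [T, coeff_add, coeff_smul, coeff_comp_lin hA p c₀, coeff_comp_lin hB p c₁,
    smul_eq_mul, lamAB]
  rw [← zpow_aux hA, ← zpow_aux hB]; ring

lemma degree_lt_of (p : Polynomial ℂ) (n : ℕ) (h1 : p.degree ≤ ((n : ℕ) : WithBot ℕ))
    (h2 : p.coeff n = 0) : p.degree < ((n : ℕ) : WithBot ℕ) := by
  rw [degree_lt_iff_coeff_zero]
  intro m hm
  rcases eq_or_lt_of_le hm with rfl | hm'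
  · exact h2
  · exact coeff_eq_zero_of_degree_lt (h1.trans_lt (by exact_mod_cast hm'))

lemma degree_r_lt (hA : A ≠ 0) (hB : B ≠ 0) (d : ℕ) :
    (T A B c₀ c₁ (X ^ d) - lamAB A B d • X ^ d).degree < ((d : ℕ) : WithBot ℕ) := by
  refine degree_lt_of _ d ?_ ?_
  · refine (degree_sub_le _ _).trans (max_le ?_ ?_)
    · exact (degree_T_le hA hB _).trans (by simp [degree_X_pow])
    · exact (degree_smul_le _ _).trans (by simp [degree_X_pow])
  · have h := coeff_T (c₀ := c₀) (c₁ := c₁) hA hB (X ^ d)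
    rw [natDegree_X_pow, leadingCoeff_X_pow] at h
    simp [coeff_sub, h, coeff_smul, coeff_X_pow]

lemma solve (hA : A ≠ 0) (hB : B ≠ 0) :
    ∀ d : ℕ, ∀ μ : ℂ, (∀ k : ℕ, k < d → μ ≠ lamAB A B k) →
    ∀ g : Polynomial ℂ, g.degree < ((d : ℕ) : WithBot ℕ) →
    ∃ q : Polynomial ℂ, q.degree < ((d : ℕ) : WithBot ℕ) ∧ T A B c₀ c₁ q - μ • q = g := by
  intro d
  induction d with
  | zero =>
    intro μ _ g hg
    have hg0 : g = 0 := by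
      rw [← degree_eq_bot]
      exact Nat.WithBot.lt_zero_iff.mp (by simpa using hg)
    refine ⟨0, ?_, by simp [T_zero, hg0]⟩
    exact WithBot.bot_lt_coe 0
  | succ d IH =>
    intro μ hμ g hg
    have hμd : μ ≠ lamAB A B d := hμ d (Nat.lt_succ_self d)
    have hgd : g.degree ≤ ((d : ℕ) : WithBot ℕ) := by
      rw [degree_le_iff_coeff_zero]
      intro m hm
      refine (degree_lt_iff_coeff_zero g (d+1)).mp (by exact_mod_cast hg) m ?_
      exact_mod_cast Nat.add_one_le_iff.mpr (by exact_mod_cast hm)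
    set c : ℂ := g.coeff d with hc
    set e : ℂ := c / (lamAB A B d - μ) with he
    set r : Polynomial ℂ := T A B c₀ c₁ (X ^ d) - lamAB A B d • X ^ d with hr
    have hrdeg : r.degree < ((d : ℕ) : WithBot ℕ) := degree_r_lt hA hB d
    set g' : Polynomial ℂ := g - c • X ^ d - e • r with hg'
    have hg'deg : g'.degree < ((d : ℕ) : WithBot ℕ) := by
      have h1 : (g - c • X ^ d).degree < ((d : ℕ) : WithBot ℕ) := by
        refine degree_lt_of _ d ?_ ?_
        · refine (degree_sub_le _ _).trans (max_le hgd ?_)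
          exact (degree_smul_le _ _).trans (by simp [degree_X_pow])
        · simp [hc, coeff_smul, coeff_X_pow]
      exact (degree_sub_le _ _).trans_lt
        (max_lt h1 ((degree_smul_le _ _).trans_lt hrdeg))
    obtain ⟨q', hq'deg, hq'⟩ := IH μ (fun k hk => hμ k (hk.trans (Nat.lt_succ_self d))) g' hg'deg
    have hdlt : ((d : ℕ) : WithBot ℕ) < ((d + 1 : ℕ) : WithBot ℕ) := by
      exact_mod_cast Nat.lt_succ_self d
    refine ⟨e • X ^ d + q', ?_, ?_⟩
    · refine (degree_add_le _ _).trans_lt (max_lt ?_ (hq'deg.trans hdlt))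
      exact (degree_smul_le _ _).trans_lt (by simpa [degree_X_pow] using hdlt)
    · have he' : e * (lamAB A B d - μ) = c :=
        div_mul_cancel₀ c (sub_ne_zero.mpr (Ne.symm hμd))
      have hTX : T A B c₀ c₁ (X ^ d) = lamAB A B d • X ^ d + r := by
        rw [hr]; module
      have hgeq : g = g' + c • X ^ d + e • r := by rw [hg']; module
      rw [T_add, T_smul, hTX, hgeq, ← hq']
      have hce : c • (X ^ d : Polynomial ℂ)
          = (e * lamAB A B d) • X ^ d - (μ * e) • X ^ d := by
        rw [← sub_smul]
        congr 1
        rw [← he']; ring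
      rw [hce]
      module

lemma main (hA : A ≠ 0) (hB : B ≠ 0) (n : ℕ)
    (hn : ∀ k : ℕ, k < n → lamAB A B n ≠ lamAB A B k) :
    ∃ p : Polynomial ℂ, p.degree = (n : ℕ) ∧
      T A B c₀ c₁ p = lamAB A B n • p := by
  set μ := lamAB A B n with hμ
  set r : Polynomial ℂ := T A B c₀ c₁ (X ^ n) - μ • X ^ n with hr
  have hrdeg : r.degree < ((n : ℕ) : WithBot ℕ) := degree_r_lt hA hB n
  obtain ⟨q, hqdeg, hq⟩ := solve hA hB n μ hn (-r)
    (by simpa [degree_neg] using hrdeg)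
  refine ⟨X ^ n + q, ?_, ?_⟩
  · rw [degree_add_eq_left_of_degree_lt (by simpa [degree_X_pow] using hqdeg), degree_X_pow]
  · have hTX : T A B c₀ c₁ (X ^ n) = μ • X ^ n + r := by rw [hr]; module
    have hTq : T A B c₀ c₁ q = μ • q - r := by
      have := hq
      rw [sub_eq_iff_eq_add] at this
      rw [this]; module
    rw [T_add, hTX, hTq]
    module

end Stmt4Aux

/-- Fix reals `b > a > 2` and `t ∈ ℝ`, write `ω = exp(2πit)`, and fix complex constants
`c₀, c₁`.  Let `E₀ z = c₀ + z/(aω)`, `E₁ z = c₁ + z/b` and let `L` be the transfer operator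
`(L v)(z) = aω·v(E₀ z) + b·v(E₁ z)`; set `λ_{n,t} = b^(1-n) + (aω)^(1-n)`.
Then for every `n ≥ 0` with `λ_{n,t} ≠ λ_{k,t}` for all `0 ≤ k < n` there is a polynomial
`p` of degree exactly `n` with `L p = λ_{n,t} · p`; in particular each such `λ_{n,t}` is an
eigenvalue of `L`.  Moreover `λ_{1,t} = 2` independently of `t`. -/
theorem stmt4 (a b t : ℝ) (ha : 2 < a) (hab : a < b)
    (ω : ℂ) (hω : ω = Complex.exp (2 * Real.pi * t * Complex.I))
    (c₀ c₁ : ℂ)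
    (E₀ E₁ : ℂ → ℂ)
    (hE₀ : ∀ z : ℂ, E₀ z = c₀ + z / ((a : ℂ) * ω))
    (hE₁ : ∀ z : ℂ, E₁ z = c₁ + z / (b : ℂ))
    (L : (ℂ → ℂ) → (ℂ → ℂ))
    (hL : ∀ (v : ℂ → ℂ) (z : ℂ), L v z = (a : ℂ) * ω * v (E₀ z) + (b : ℂ) * v (E₁ z))
    (lam : ℕ → ℂ)
    (hlam : ∀ n : ℕ, lam n = (b : ℂ) ^ (1 - (n : ℤ)) + ((a : ℂ) * ω) ^ (1 - (n : ℤ))) :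
    (∀ n : ℕ, (∀ k : ℕ, k < n → lam n ≠ lam k) →
      ∃ p : Polynomial ℂ, p.degree = (n : ℕ) ∧
        ∀ z : ℂ, L (fun w => p.eval w) z = lam n * p.eval z) ∧
    lam 1 = 2 := by
  set A : ℂ := (a : ℂ) * ω with hA'
  set B : ℂ := (b : ℂ) with hB'
  have hA : A ≠ 0 := by
    apply mul_ne_zero
    · exact_mod_cast (by linarith : (0:ℝ) < a).ne'
    · rw [hω]; exact Complex.exp_ne_zero _
  have hB : B ≠ 0 := by
    rw [hB']; exact_mod_cast (by linarith : (0:ℝ) < b).ne'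
  have hlam' : ∀ n, lam n = Stmt4Aux.lamAB A B n := by
    intro n; rw [hlam]; rfl
  constructor
  · intro n hn
    obtain ⟨p, hpdeg, hp⟩ := Stmt4Aux.main (c₀ := c₀) (c₁ := c₁) hA hB n
      (by intro k hk; rw [← hlam' n, ← hlam' k]; exact hn k hk)
    refine ⟨p, hpdeg, ?_⟩
    intro z
    have hev := congrArg (Polynomial.eval z) hp
    simp only [Stmt4Aux.T, Polynomial.eval_add, Polynomial.eval_smul, Polynomial.eval_comp,
      Polynomial.eval_mul, Polynomial.eval_C, Polynomial.eval_X, smul_eq_mul] at hev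
    rw [hL, hE₀, hE₁, hlam' n]
    have h1 : c₀ + z / A = A⁻¹ * z + c₀ := by rw [div_eq_mul_inv, mul_comm, add_comm]
    have h2 : c₁ + z / B = B⁻¹ * z + c₁ := by rw [div_eq_mul_inv, mul_comm, add_comm]
    rw [h1, h2]
    exact hev
  · rw [hlam 1]; norm_num
end

section
/- The maximal invariant set Λ of σ coincides with the attractor of g, namely the closure of the forward orbit of the critical value: Λ = closure({gⁿ(1) : n ≥ 0}) = closure({gⁿ(0) : n ≥ 1}). -/
open Set

/-- Feigenbaum context: `g` is the fixed point of the period doubling operator,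
`σ` is the induced expanding map on `J₀ ∪ J₁`, and `Λ` is its maximal invariant set.
Claim: `Λ` coincides with the attractor of `g`, namely the closure of the forward
orbit of the critical value: `Λ = closure {gⁿ(1) : n ≥ 0} = closure {gⁿ(0) : n ≥ 1}`. -/
theorem stmt6
    (g : ℝ → ℝ) (α : ℝ)
    (hg_an : AnalyticOnNhd ℝ g (Icc (-1) 1))
    (hg_even : ∀ x : ℝ, g (-x) = g x)
    (hg_anti : StrictAntiOn g (Icc 0 1))
    (hg0 : g 0 = 1)
    (hg'' : iteratedDeriv 2 g 0 < 0)
    (h1 : g 1 < 0) (h2 : 0 < g (g (g 1))) (h3 : g (g (g 1)) < -g 1) (h4 : -g 1 < g (g 1))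
    (hα : α = -1 / g 1) (hα1 : 1 < α)
    (hCF : ∀ x ∈ Icc (-1 : ℝ) 1, g x = -α * g (g (-x / α)))
    (J J₀ J₁ : Set ℝ)
    (hJ : J = Icc (g 1) 1) (hJ₀ : J₀ = Icc (g 1) (g (g (g 1)))) (hJ₁ : J₁ = Icc (g (g 1)) 1)
    (hg'J₁ : ∀ x ∈ J₁, 1 < |deriv g x|)
    (σ : ℝ → ℝ)
    (hσ0 : ∀ x ∈ J₀, σ x = -α * x)
    (hσ1 : ∀ x ∈ J₁, σ x = -α * g x)
    (Λ : Set ℝ)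
    (hΛ : Λ = {x : ℝ | ∀ k : ℕ, σ^[k] x ∈ J₀ ∪ J₁}) :
    Λ = closure (range fun k : ℕ => g^[k] 1) ∧
    Λ = closure (range fun k : ℕ => g^[k + 1] 0) := by
  subst hJ hJ₀ hJ₁ hΛ
  -- Basic numeric facts
  have hα0 : (0:ℝ) < α := lt_trans one_pos hα1
  have hαne : α ≠ 0 := ne_of_gt hα0
  have hαg : α * g 1 = -1 := by
    rw [hα, div_mul_cancel₀ (-1 : ℝ) (ne_of_lt h1)]
  have hg1gt : -1 < g 1 := by nlinarith
  have hgneg_pos : 0 < -g 1 := by linarith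
  have hmg1lt1 : -g 1 < 1 := by nlinarith
  have hc2pos : 0 < g (g 1) := lt_trans hgneg_pos h4
  -- monotonicity helper
  have gmono : ∀ u v : ℝ, 0 ≤ u → u ≤ v → v ≤ 1 → g v ≤ g u := by
    intro u v hu huv hv
    rcases eq_or_lt_of_le huv with rfl | h
    · exact le_rfl
    · exact (hg_anti ⟨hu, le_trans huv hv⟩ ⟨le_trans hu huv, hv⟩ h).le
  have hc2le1 : g (g 1) ≤ 1 := by
    have he : g (g 1) = g (-g 1) := (hg_even (g 1)).symm
    have h := gmono 0 (-g 1) le_rfl hgneg_pos.le hmg1lt1.le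
    rw [hg0] at h
    rw [he]
    exact h
  have hc3lt1 : g (g (g 1)) < 1 := by linarith
  -- the branch mapping lemmas
  have gJ : ∀ x, x ∈ Icc (g 1) 1 → g x ∈ Icc (g 1) 1 := by
    intro x hx
    rcases le_or_gt 0 x with hx0 | hx0
    · refine ⟨gmono x 1 hx0 hx.2 le_rfl, ?_⟩
      have h := gmono 0 x le_rfl hx0 hx.2
      rw [hg0] at h
      exact h
    · have he : g x = g (-x) := (hg_even x).symm
      rw [he]
      constructor
      · exact gmono (-x) 1 (by linarith) (by linarith [hx.1]) le_rfl
      · have h := gmono 0 (-x) le_rfl (by linarith) (by linarith [hx.1])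
        rw [hg0] at h
        exact h
  have gJ₀ : ∀ x, x ∈ Icc (g 1) (g (g (g 1))) → g x ∈ Icc (g (g 1)) 1 := by
    intro x hx
    have hgg : g (-g 1) = g (g 1) := hg_even (g 1)
    rcases le_or_gt 0 x with hx0 | hx0
    · constructor
      · rw [← hgg]; exact gmono x (-g 1) hx0 (by linarith [hx.2]) hmg1lt1.le
      · have h := gmono 0 x le_rfl hx0 (by linarith [hx.2, h3])
        rw [hg0] at h
        exact h
    · have he : g x = g (-x) := (hg_even x).symm
      rw [he]
      constructor
      · rw [← hgg]; exact gmono (-x) (-g 1) (by linarith) (by linarith [hx.1]) hmg1lt1.le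
      · have h := gmono 0 (-x) le_rfl (by linarith) (by linarith [hx.1])
        rw [hg0] at h
        exact h
  have gJ₁ : ∀ x, x ∈ Icc (g (g 1)) 1 → g x ∈ Icc (g 1) (g (g (g 1))) := by
    intro x hx
    exact ⟨gmono x 1 (by linarith [hx.1]) hx.2 le_rfl,
      gmono (g (g 1)) x hc2pos.le hx.1 hx.2⟩
  -- iterates of 1
  have hit : ∀ n : ℕ, g^[n+1] 1 = g (g^[n] 1) := fun n => Function.iterate_succ_apply' g n 1
  have aJ : ∀ n : ℕ, g^[n] 1 ∈ Icc (g 1) 1 := by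
    intro n
    induction n with
    | zero =>
      simp only [Function.iterate_zero_apply]
      exact ⟨by linarith, le_rfl⟩
    | succ n ih => rw [hit]; exact gJ _ ih
  -- The key orbit combinatorics
  have AB : ∀ k : ℕ,
      (g^[2*k] 1 ∈ Icc (g (g 1)) 1 ∧ σ (g^[2*k] 1) = g^[k] 1) ∧
      (g^[2*k+1] 1 ∈ Icc (g 1) (g (g (g 1))) ∧ σ (g^[2*k+1] 1) = g^[k] 1) := by
    intro k
    induction k with
    | zero =>
      simp only [Nat.mul_zero, Nat.zero_add, Function.iterate_zero_apply, Function.iterate_one]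
      refine ⟨⟨⟨hc2le1, le_rfl⟩, ?_⟩, ⟨⟨le_rfl, by linarith⟩, ?_⟩⟩
      · rw [hσ1 1 ⟨hc2le1, le_rfl⟩]; linarith
      · rw [hσ0 (g 1) ⟨le_rfl, by linarith⟩]; linarith
    | succ k ih =>
      obtain ⟨⟨hA, hAσ⟩, ⟨hB, hBσ⟩⟩ := ih
      have e2 : 2*(k+1) = (2*k+1)+1 := by ring
      have hval2 : g^[2*(k+1)] 1 = g (g^[2*k+1] 1) := by rw [e2, hit]
      have hmem2 : g^[2*(k+1)] 1 ∈ Icc (g (g 1)) 1 := by rw [hval2]; exact gJ₀ _ hB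
      have hBσ' : -α * g^[2*k+1] 1 = g^[k] 1 := by rw [← hσ0 _ hB]; exact hBσ
      have hak : -g^[k] 1 / α = g^[2*k+1] 1 := by
        rw [← hBσ']
        field_simp
      have hσ2 : σ (g^[2*(k+1)] 1) = g^[k+1] 1 := by
        have hCFk := hCF (g^[k] 1) ⟨by linarith [(aJ k).1], (aJ k).2⟩
        rw [hak] at hCFk
        rw [hval2, hσ1 _ (gJ₀ _ hB), ← hCFk]
        exact (hit k).symm
      have hmem3 : g^[2*(k+1)+1] 1 ∈ Icc (g 1) (g (g (g 1))) := by
        rw [hit]; exact gJ₁ _ hmem2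
      refine ⟨⟨hmem2, hσ2⟩, hmem3, ?_⟩
      rw [hit (2*(k+1)), hσ0 _ (gJ₁ _ hmem2), ← hσ1 _ hmem2]
      exact hσ2
  have orbitstep : ∀ n : ℕ, σ (g^[n] 1) = g^[n/2] 1 ∧
      g^[n] 1 ∈ Icc (g 1) (g (g (g 1))) ∪ Icc (g (g 1)) 1 := by
    intro n
    rcases Nat.even_or_odd n with ⟨k, hk⟩ | ⟨k, hk⟩
    · have hn : n = 2*k := by omega
      subst hn
      have hd : 2*k/2 = k := by omega
      rw [hd]
      exact ⟨(AB k).1.2, Or.inr (AB k).1.1⟩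
    · have hn : n = 2*k+1 := by omega
      subst hn
      have hd : (2*k+1)/2 = k := by omega
      rw [hd]
      exact ⟨(AB k).2.2, Or.inl (AB k).2.1⟩
  have iterorb : ∀ j n : ℕ, σ^[j] (g^[n] 1) = g^[n / 2^j] 1 := by
    intro j
    induction j with
    | zero => intro n; simp
    | succ j ih =>
      intro n
      rw [Function.iterate_succ_apply, (orbitstep n).1, ih (n/2)]
      have e : n / 2 / 2 ^ j = n / 2 ^ (j+1) := by
        rw [Nat.div_div_eq_div_mul, pow_succ, Nat.mul_comm]
      rw [e]
  have orbitΛ : ∀ n : ℕ, ∀ j : ℕ,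
      σ^[j] (g^[n] 1) ∈ Icc (g 1) (g (g (g 1))) ∪ Icc (g (g 1)) 1 := by
    intro n j; rw [iterorb]; exact (orbitstep _).2
  -- disjointness
  have hdisj : ∀ x : ℝ, x ∈ Icc (g 1) (g (g (g 1))) → x ∉ Icc (g (g 1)) 1 := by
    intro x hx hx'
    have := hx.2
    have := hx'.1
    linarith
  -- expansion on J₁
  have hgc : ContinuousOn g (Icc (-1:ℝ) 1) := hg_an.continuousOn
  have expand : ∀ u v : ℝ, u ∈ Icc (g (g 1)) 1 → v ∈ Icc (g (g 1)) 1 →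
      |u - v| ≤ |g u - g v| := by
    have key : ∀ u v : ℝ, u ∈ Icc (g (g 1)) 1 → v ∈ Icc (g (g 1)) 1 → u < v →
        v - u ≤ |g u - g v| := by
      intro u v hu hv huv
      have hsub : Icc u v ⊆ Icc (-1:ℝ) 1 :=
        Icc_subset_Icc (by linarith [hu.1]) hv.2
      have hcont : ContinuousOn g (Icc u v) := hgc.mono hsub
      have hdiff : ∀ x ∈ Ioo u v, HasDerivAt g (deriv g x) x := fun x hx =>
        ((hg_an x (hsub ⟨hx.1.le, hx.2.le⟩)).differentiableAt).hasDerivAt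
      obtain ⟨c, hc, hceq⟩ := exists_hasDerivAt_eq_slope g (deriv g) huv hcont hdiff
      have hcJ : (1:ℝ) < |deriv g c| :=
        hg'J₁ c ⟨le_trans hu.1 hc.1.le, le_trans hc.2.le hv.2⟩
      have hne : v - u ≠ 0 := by linarith
      have heq : g v - g u = deriv g c * (v - u) := by
        rw [hceq]; field_simp
      have : |g v - g u| = |deriv g c| * (v - u) := by
        rw [heq, abs_mul, abs_of_pos (by linarith : (0:ℝ) < v - u)]
      rw [abs_sub_comm, this]
      nlinarith
    intro u v hu hv
    rcases lt_trichotomy u v with h | h | h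
    · have hk := key u v hu hv h
      calc |u - v| = v - u := by rw [abs_sub_comm, abs_of_pos (by linarith)]
        _ ≤ |g u - g v| := hk
    · simp [h]
    · have hk := key v u hv hu h
      calc |u - v| = u - v := abs_of_pos (by linarith)
        _ ≤ |g v - g u| := hk
        _ = |g u - g v| := abs_sub_comm _ _
  -- contraction: points with the same itinerary up to m are α^{-m}-close
  have contract : ∀ m : ℕ, ∀ u v : ℝ,
      (∀ k, σ^[k] u ∈ Icc (g 1) (g (g (g 1))) ∪ Icc (g (g 1)) 1) →
      (∀ k, σ^[k] v ∈ Icc (g 1) (g (g (g 1))) ∪ Icc (g (g 1)) 1) →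
      (∀ j < m, (σ^[j] u ∈ Icc (g (g 1)) 1 ↔ σ^[j] v ∈ Icc (g (g 1)) 1)) →
      |u - v| ≤ 2 / α ^ m := by
    intro m
    induction m with
    | zero =>
      intro u v hu hv _
      have hu0 := hu 0; have hv0 := hv 0
      simp only [Function.iterate_zero_apply] at hu0 hv0
      have hub : -1 ≤ u ∧ u ≤ 1 := by
        rcases hu0 with h | h
        · exact ⟨by linarith [h.1], by linarith [h.2, h3, h4]⟩
        · exact ⟨by linarith [h.1], h.2⟩
      have hvb : -1 ≤ v ∧ v ≤ 1 := by
        rcases hv0 with h | h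
        · exact ⟨by linarith [h.1], by linarith [h.2, h3, h4]⟩
        · exact ⟨by linarith [h.1], h.2⟩
      rw [pow_zero]
      rw [abs_sub_le_iff]
      constructor <;> linarith [hub.1, hub.2, hvb.1, hvb.2]
    | succ m ih =>
      intro u v hu hv hmatch
      have hu0 := hu 0; have hv0 := hv 0
      simp only [Function.iterate_zero_apply] at hu0 hv0
      have hσu : ∀ k, σ^[k] (σ u) ∈ Icc (g 1) (g (g (g 1))) ∪ Icc (g (g 1)) 1 := fun k => by
        rw [← Function.iterate_succ_apply]; exact hu (k+1)
      have hσv : ∀ k, σ^[k] (σ v) ∈ Icc (g 1) (g (g (g 1))) ∪ Icc (g (g 1)) 1 := fun k => by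
        rw [← Function.iterate_succ_apply]; exact hv (k+1)
      have hm' : ∀ j < m, (σ^[j] (σ u) ∈ Icc (g (g 1)) 1 ↔ σ^[j] (σ v) ∈ Icc (g (g 1)) 1) := by
        intro j hj
        rw [← Function.iterate_succ_apply, ← Function.iterate_succ_apply]
        exact hmatch (j+1) (by omega)
      have hrec := ih (σ u) (σ v) hσu hσv hm'
      have h0 := hmatch 0 (Nat.succ_pos m)
      simp only [Function.iterate_zero_apply] at h0
      have hα2 : α * |u - v| ≤ |σ u - σ v| := by
        by_cases hu1 : u ∈ Icc (g (g 1)) 1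
        · have hv1 : v ∈ Icc (g (g 1)) 1 := h0.mp hu1
          rw [hσ1 u hu1, hσ1 v hv1,
            show -α * g u - -α * g v = -α * (g u - g v) by ring,
            abs_mul, abs_neg, abs_of_pos hα0]
          exact mul_le_mul_of_nonneg_left (expand u v hu1 hv1) hα0.le
        · have hu0' : u ∈ Icc (g 1) (g (g (g 1))) := hu0.resolve_right hu1
          have hv1 : v ∉ Icc (g (g 1)) 1 := fun h => hu1 (h0.mpr h)
          have hv0' : v ∈ Icc (g 1) (g (g (g 1))) := hv0.resolve_right hv1
          rw [hσ0 u hu0', hσ0 v hv0',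
            show -α * u - -α * v = -α * (u - v) by ring,
            abs_mul, abs_neg, abs_of_pos hα0]
      have hcomb : α * |u - v| ≤ 2 / α ^ m := le_trans hα2 hrec
      have hp : (0:ℝ) < α ^ m := pow_pos hα0 m
      have h2' : (α * |u - v|) * α ^ m ≤ (2 / α ^ m) * α ^ m :=
        mul_le_mul_of_nonneg_right hcomb hp.le
      rw [div_mul_cancel₀ _ hp.ne'] at h2'
      rw [pow_succ, le_div_iff₀ (by positivity)]
      calc |u - v| * (α ^ m * α) = (α * |u - v|) * α ^ m := by ring
        _ ≤ 2 := h2'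
  -- matching: every itinerary prefix in Λ is realized by an orbit point
  have matching : ∀ m : ℕ, ∀ x : ℝ,
      (∀ k, σ^[k] x ∈ Icc (g 1) (g (g (g 1))) ∪ Icc (g (g 1)) 1) →
      ∃ n : ℕ, ∀ j < m,
        (σ^[j] (g^[n] 1) ∈ Icc (g (g 1)) 1 ↔ σ^[j] x ∈ Icc (g (g 1)) 1) := by
    intro m
    induction m with
    | zero => intro x _; exact ⟨0, fun j hj => absurd hj (Nat.not_lt_zero j)⟩
    | succ m ih =>
      intro x hx
      have hσx : ∀ k, σ^[k] (σ x) ∈ Icc (g 1) (g (g (g 1))) ∪ Icc (g (g 1)) 1 := fun k => by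
        rw [← Function.iterate_succ_apply]; exact hx (k+1)
      obtain ⟨n, hn⟩ := ih (σ x) hσx
      have hx0 := hx 0
      simp only [Function.iterate_zero_apply] at hx0
      by_cases hx1 : x ∈ Icc (g (g 1)) 1
      · refine ⟨2*n, fun j hj => ?_⟩
        match j with
        | 0 =>
          simp only [Function.iterate_zero_apply]
          exact iff_of_true (AB n).1.1 hx1
        | Nat.succ j =>
          rw [Function.iterate_succ_apply σ j (g^[2*n] 1), Function.iterate_succ_apply σ j x,
            (AB n).1.2]
          exact hn j (by omega)
      · have hx0' : x ∈ Icc (g 1) (g (g (g 1))) := hx0.resolve_right hx1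
        refine ⟨2*n+1, fun j hj => ?_⟩
        match j with
        | 0 =>
          simp only [Function.iterate_zero_apply]
          exact iff_of_false (hdisj _ (AB n).2.1) hx1
        | Nat.succ j =>
          rw [Function.iterate_succ_apply σ j (g^[2*n+1] 1), Function.iterate_succ_apply σ j x,
            (AB n).2.2]
          exact hn j (by omega)
  -- Λ is closed
  have hKclosed : IsClosed (Icc (g 1) (g (g (g 1))) ∪ Icc (g (g 1)) 1) :=
    isClosed_Icc.union isClosed_Icc
  have contσ : ContinuousOn σ (Icc (g 1) (g (g (g 1))) ∪ Icc (g (g 1)) 1) := by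
    intro x hx
    rcases hx with hx0 | hx1
    · have hop : IsOpen (Icc (g (g 1)) (1:ℝ))ᶜ := isClosed_Icc.isOpen_compl
      have hev : ∀ᶠ y in nhdsWithin x (Icc (g 1) (g (g (g 1))) ∪ Icc (g (g 1)) 1),
          σ y = -α * y := by
        filter_upwards [mem_nhdsWithin_of_mem_nhds (hop.mem_nhds (hdisj x hx0)),
          self_mem_nhdsWithin] with y hy1 hy2
        exact hσ0 y (hy2.resolve_right hy1)
      exact ((continuous_const.mul continuous_id).continuousWithinAt).congr_of_eventuallyEq
        hev (hσ0 x hx0)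
    · have hxd : x ∉ Icc (g 1) (g (g (g 1))) := fun h => hdisj x h hx1
      have hop : IsOpen (Icc (g 1) (g (g (g 1))))ᶜ := isClosed_Icc.isOpen_compl
      have hev : ∀ᶠ y in nhdsWithin x (Icc (g 1) (g (g (g 1))) ∪ Icc (g (g 1)) 1),
          σ y = -α * g y := by
        filter_upwards [mem_nhdsWithin_of_mem_nhds (hop.mem_nhds hxd),
          self_mem_nhdsWithin] with y hy1 hy2
        exact hσ1 y (hy2.resolve_left hy1)
      have hgx : ContinuousAt g x :=
        (hg_an x ⟨by linarith [hx1.1], hx1.2⟩).continuousAt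
      exact ((continuousAt_const.mul hgx).continuousWithinAt).congr_of_eventuallyEq
        hev (hσ1 x hx1)
  have hT : ∀ k : ℕ,
      IsClosed {x : ℝ | ∀ j ≤ k, σ^[j] x ∈ Icc (g 1) (g (g (g 1))) ∪ Icc (g (g 1)) 1} ∧
      ContinuousOn (σ^[k+1])
        {x : ℝ | ∀ j ≤ k, σ^[j] x ∈ Icc (g 1) (g (g (g 1))) ∪ Icc (g (g 1)) 1} := by
    intro k
    induction k with
    | zero =>
      have hTe : {x : ℝ | ∀ j ≤ 0, σ^[j] x ∈ Icc (g 1) (g (g (g 1))) ∪ Icc (g (g 1)) 1}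
          = Icc (g 1) (g (g (g 1))) ∪ Icc (g (g 1)) 1 := by
        ext y
        simp only [mem_setOf_eq, Nat.le_zero]
        constructor
        · intro h; have := h 0 rfl; simpa using this
        · intro h j hj; subst hj; simpa using h
      rw [hTe]
      refine ⟨hKclosed, ?_⟩
      have : σ^[0+1] = σ := by simp
      rw [this]
      exact contσ
    | succ k ih =>
      have hset : {x : ℝ | ∀ j ≤ k+1, σ^[j] x ∈ Icc (g 1) (g (g (g 1))) ∪ Icc (g (g 1)) 1}
          = {x : ℝ | ∀ j ≤ k, σ^[j] x ∈ Icc (g 1) (g (g (g 1))) ∪ Icc (g (g 1)) 1}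
            ∩ (σ^[k+1]) ⁻¹' (Icc (g 1) (g (g (g 1))) ∪ Icc (g (g 1)) 1) := by
        ext y
        simp only [mem_setOf_eq, mem_inter_iff, mem_preimage]
        constructor
        · intro h; exact ⟨fun j hj => h j (by omega), h (k+1) le_rfl⟩
        · rintro ⟨h, h'⟩ j hj
          rcases Nat.lt_or_ge j (k+1) with hlt | hge
          · exact h j (by omega)
          · have : j = k+1 := by omega
            subst this; exact h'
      have hclosed : IsClosed {x : ℝ | ∀ j ≤ k+1,
          σ^[j] x ∈ Icc (g 1) (g (g (g 1))) ∪ Icc (g (g 1)) 1} := by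
        rw [hset]
        exact ih.2.preimage_isClosed_of_isClosed ih.1 hKclosed
      refine ⟨hclosed, ?_⟩
      have hmaps : MapsTo (σ^[k+1])
          {x : ℝ | ∀ j ≤ k+1, σ^[j] x ∈ Icc (g 1) (g (g (g 1))) ∪ Icc (g (g 1)) 1}
          (Icc (g 1) (g (g (g 1))) ∪ Icc (g (g 1)) 1) := fun y hy => hy (k+1) le_rfl
      have hcont1 : ContinuousOn (σ^[k+1])
          {x : ℝ | ∀ j ≤ k+1, σ^[j] x ∈ Icc (g 1) (g (g (g 1))) ∪ Icc (g (g 1)) 1} := by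
        apply ih.2.mono
        intro y hy j hj
        exact hy j (by omega)
      have : σ^[k+1+1] = σ ∘ σ^[k+1] := Function.iterate_succ' σ (k+1)
      rw [this]
      exact contσ.comp hcont1 hmaps
  have hΛclosed : IsClosed {x : ℝ | ∀ k : ℕ,
      σ^[k] x ∈ Icc (g 1) (g (g (g 1))) ∪ Icc (g (g 1)) 1} := by
    have he : {x : ℝ | ∀ k : ℕ, σ^[k] x ∈ Icc (g 1) (g (g (g 1))) ∪ Icc (g (g 1)) 1}
        = ⋂ k : ℕ, {x : ℝ | ∀ j ≤ k, σ^[j] x ∈ Icc (g 1) (g (g (g 1))) ∪ Icc (g (g 1)) 1} := by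
      ext y
      simp only [mem_setOf_eq, mem_iInter]
      exact ⟨fun h k j _ => h j, fun h k => h k k le_rfl⟩
    rw [he]
    exact isClosed_iInter fun k => (hT k).1
  -- main equality
  have main : {x : ℝ | ∀ k : ℕ, σ^[k] x ∈ Icc (g 1) (g (g (g 1))) ∪ Icc (g (g 1)) 1}
      = closure (range fun k : ℕ => g^[k] 1) := by
    apply Subset.antisymm
    · intro x hx
      rw [Metric.mem_closure_iff]
      intro ε hε
      obtain ⟨m, hm⟩ := exists_pow_lt_of_lt_one (show (0:ℝ) < ε/2 by linarith)
        (show 1/α < 1 by rw [div_lt_one hα0]; exact hα1)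
      obtain ⟨n, hn⟩ := matching m x hx
      refine ⟨g^[n] 1, mem_range_self n, ?_⟩
      have hc := contract m (g^[n] 1) x (orbitΛ n) hx hn
      rw [Real.dist_eq]
      have hm' : 1/α^m < ε/2 := by
        calc 1/α^m = (1/α)^m := by rw [div_pow, one_pow]
          _ < ε/2 := hm
      have hαm : (0:ℝ) < α^m := pow_pos hα0 m
      calc |x - g^[n] 1| = |g^[n] 1 - x| := abs_sub_comm _ _
        _ ≤ 2/α^m := hc
        _ < ε := by
            have : 2/α^m = 2*(1/α^m) := by ring
            rw [this]; linarith
    · refine closure_minimal ?_ hΛclosed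
      rintro y ⟨n, rfl⟩
      exact fun k => orbitΛ n k
  refine ⟨main, ?_⟩
  have hfe : (fun k : ℕ => g^[k+1] 0) = fun k : ℕ => g^[k] 1 := by
    funext k
    rw [Function.iterate_succ_apply, hg0]
  rw [hfe]
  exact main
end

section
/- The pushforward v ↦ v∘g is a linear bijection between real-analytic functions on J and even real-analytic functions on I: for every function W that is even and real-analytic on a neighborhood of I there exists a function v, real-analytic on a neighborhood of J, with W(x) = v(g(x)) for all x ∈ I, and v is uniquely determined on J; conversely, for every v real-analytic on a neighborhood of J, the composition v∘g is even and real-analytic on a neighborhood of I. -/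
open Set Filter Topology FormalMultilinearSeries
open scoped Nat

/-!
An even analytic `f` factors as `f x = f₁ (x ^ 2)` with `f₁` analytic at each `x ^ 2`: away from `0`
because `x ↦ x ^ 2` is a local analytic diffeomorphism there, and at `0` because the odd Taylor
coefficients of `f` vanish, so `f₁` is the sum of the series of even coefficients. Writing
`g x = g₁ (x ^ 2)`, we get `g₁'(0) = g''(0) / 2` and `g'(x) = 2 x g₁'(x ^ 2)`, so `g₁' ≠ 0` on
`[0, 1]`. By Rolle `g₁` is then injective on a neighbourhood of `[0, 1]`, and `v := W₁ ∘ g₁⁻¹` is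
analytic on `J = g₁ '' [0, 1]` by the analytic inverse function theorem.
-/

theorem isOpen_setOf_analyticAt_and_deriv_ne_zero {𝕜 F : Type*} [NontriviallyNormedField 𝕜]
    [NormedAddCommGroup F] [NormedSpace 𝕜 F] [CompleteSpace F] (f : 𝕜 → F) :
    IsOpen {x | AnalyticAt 𝕜 f x ∧ deriv f x ≠ 0} := by
  refine isOpen_iff_mem_nhds.2 fun x ⟨hfx, hf'x⟩ => ?_
  filter_upwards [(isOpen_analyticAt 𝕜 f).mem_nhds hfx,
    hfx.deriv.continuousAt.eventually_ne hf'x] with y hy hy' using ⟨hy, hy'⟩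

theorem injOn_of_deriv_ne_zero {f : ℝ → ℝ} {s : Set ℝ} (hs : s.OrdConnected)
    (hf : ∀ x ∈ s, deriv f x ≠ 0) : InjOn f s := by
  have key : ∀ x ∈ s, ∀ y ∈ s, x < y → f x ≠ f y := fun x hx y hy hxy hfxy => by
    have hxy_s : Icc x y ⊆ s := hs.out hx hy
    have hcont : ContinuousOn f (Icc x y) := fun z hz =>
      (differentiableAt_of_deriv_ne_zero (hf z (hxy_s hz))).continuousAt.continuousWithinAt
    obtain ⟨c, hc, hc0⟩ := exists_deriv_eq_zero hxy hcont hfxy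
    exact hf c (hxy_s (Ioo_subset_Icc_self hc)) hc0
  intro x hx y hy hfxy
  by_contra hne
  rcases lt_or_gt_of_ne hne with hlt | hlt
  · exact key x hx y hy hlt hfxy
  · exact key y hy x hx hlt hfxy.symm

theorem exists_analyticOnNhd_comp_eqOn {F : Type*} [NormedAddCommGroup F] [NormedSpace ℝ F]
    {f : ℝ → ℝ} {h : ℝ → F} {s : Set ℝ}
    (hs : IsPreconnected s) (hf : AnalyticOnNhd ℝ f s) (hf' : ∀ x ∈ s, deriv f x ≠ 0)
    (hh : AnalyticOnNhd ℝ h s) :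
    ∃ v : ℝ → F, AnalyticOnNhd ℝ v (f '' s) ∧ EqOn (v ∘ f) h s := by
  rcases s.eq_empty_or_nonempty with rfl | ⟨x₀, hx₀⟩
  · exact ⟨h, by simp, by simp⟩
  set N := connectedComponentIn {x | AnalyticAt ℝ f x ∧ deriv f x ≠ 0} x₀
  have hsN : s ⊆ N := hs.subset_connectedComponentIn hx₀ fun x hx => ⟨hf x hx, hf' x hx⟩
  have hN_open : IsOpen N := (isOpen_setOf_analyticAt_and_deriv_ne_zero f).connectedComponentIn
  have hinj : InjOn f N := injOn_of_deriv_ne_zero isPreconnected_connectedComponentIn.ordConnected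
    fun x hx => (connectedComponentIn_subset _ _ hx).2
  have hleft : ∀ x ∈ N, (h ∘ Function.invFunOn f N ∘ f) x = h x := fun x hx =>
    congrArg h (hinj.leftInvOn_invFunOn hx)
  refine ⟨h ∘ Function.invFunOn f N, ?_, fun x hx => hleft x (hsN hx)⟩
  rintro _ ⟨x, hx, rfl⟩
  refine (analyticAt_comp_iff_of_deriv_ne_zero (hf x hx) (hf' x hx)).1 ((hh x hx).congr ?_)
  filter_upwards [hN_open.mem_nhds (hsN hx)] with y hy using (hleft y hy).symm

section EvenFunctions

theorem Function.Even.apply_abs {α β : Type*} [AddGroup α] [LinearOrder α] {f : α → β}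
    (hf : f.Even) (x : α) : f |x| = f x := by
  rcases abs_choice x with h | h <;> simp [h, hf.eq]

theorem mapsTo_Icc_of_even_of_antitoneOn {g : ℝ → ℝ} {a : ℝ} (he : g.Even)
    (hg : AntitoneOn g (Icc 0 a)) : MapsTo g (Icc (-a) a) (Icc (g a) (g 0)) := by
  intro x hx
  have hx' : |x| ∈ Icc 0 a := ⟨abs_nonneg x, abs_le.2 hx⟩
  have ha : 0 ≤ a := hx'.1.trans hx'.2
  rw [← he.apply_abs x]
  exact ⟨hg hx' ⟨ha, le_rfl⟩ hx'.2, hg ⟨le_rfl, ha⟩ hx' hx'.1⟩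

theorem iteratedDeriv_zero_eq_zero_of_even {f : ℝ → ℝ} (he : f.Even) {n : ℕ}
    (hn : Odd n) : iteratedDeriv n f 0 = 0 := by
  have h := iteratedDeriv_comp_neg n f 0
  simp only [he.eq, neg_zero, hn.neg_one_pow, smul_eq_mul, neg_one_mul] at h
  linarith

theorem AnalyticAt.eventually_hasSum_iteratedDeriv {𝕜 F : Type*} [NontriviallyNormedField 𝕜]
    [CharZero 𝕜] [NormedAddCommGroup F] [NormedSpace 𝕜 F] [CompleteSpace F] {f : 𝕜 → F} {x : 𝕜}
    (hf : AnalyticAt 𝕜 f x) :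
    ∀ᶠ y in 𝓝 0, HasSum (fun n => (n ! : 𝕜)⁻¹ • y ^ n • iteratedDeriv n f x) (f (x + y)) := by
  obtain ⟨p, r, hp⟩ := hf
  filter_upwards [Metric.eball_mem_nhds 0 hp.r_pos] with y hy
  simpa [iteratedFDeriv_apply_eq_iteratedDeriv_mul_prod] using hp.hasSum_iteratedFDeriv hy

noncomputable def evenTaylorSeries (f : ℝ → ℝ) : FormalMultilinearSeries ℝ ℝ ℝ :=
  ofScalars ℝ fun n => iteratedDeriv (2 * n) f 0 / (2 * n)!

/-- For `t < 0` the value is the sum of the even Taylor series of `f` at `0`, which makes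
`sqDescent f` analytic at `0` when `f` is even and analytic there. -/
noncomputable def sqDescent (f : ℝ → ℝ) (t : ℝ) : ℝ :=
  if 0 ≤ t then f √t else (evenTaylorSeries f).sum t

variable {f : ℝ → ℝ}

theorem sqDescent_sq (he : f.Even) (x : ℝ) : sqDescent f (x ^ 2) = f x := by
  rw [sqDescent, if_pos (sq_nonneg x), Real.sqrt_sq_eq_abs, he.apply_abs]

theorem sqDescent_comp_sq (he : f.Even) : (sqDescent f ∘ fun x : ℝ => x ^ 2) = f :=
  funext (sqDescent_sq he)

theorem eventually_hasSum_evenTaylorSeries (he : f.Even) (hf : AnalyticAt ℝ f 0) :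
    ∀ᶠ x in 𝓝 0, HasSum (fun n => evenTaylorSeries f n fun _ => x ^ 2) (f x) := by
  filter_upwards [hf.eventually_hasSum_iteratedDeriv] with x hx
  rw [zero_add] at hx
  have hodd : ∀ n ∉ range (2 * ·), (n ! : ℝ)⁻¹ • x ^ n • iteratedDeriv n f 0 = 0 := by
    intro n hn
    have : Odd n := Nat.not_even_iff_odd.1 fun ⟨k, hk⟩ => hn ⟨k, by simp only; omega⟩
    simp [iteratedDeriv_zero_eq_zero_of_even he this]
  convert ((mul_right_injective₀ (two_ne_zero' ℕ)).hasSum_iff hodd).2 hx using 2 with n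
  simp only [evenTaylorSeries, ofScalars_apply_eq, Function.comp_apply, smul_eq_mul, ← pow_mul]
  ring

theorem radius_evenTaylorSeries_pos (he : f.Even) (hf : AnalyticAt ℝ f 0) :
    0 < (evenTaylorSeries f).radius := by
  have h := (eventually_hasSum_evenTaylorSeries he hf).filter_mono
    (nhdsWithin_le_nhds (s := {0}ᶜ))
  obtain ⟨x, hx, hx0⟩ := (h.and self_mem_nhdsWithin).exists
  refine lt_of_lt_of_le ?_
    ((evenTaylorSeries f).le_radius_of_tendsto (r := ‖x ^ 2‖₊) (l := 0) ?_)
  · simpa [pos_iff_ne_zero] using hx0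
  · simpa [evenTaylorSeries, ofScalars_norm, ofScalars_apply_eq, norm_mul, norm_pow, mul_comm]
      using hx.summable.tendsto_atTop_zero.norm

theorem hasFPowerSeriesAt_sqDescent (he : f.Even) (hf : AnalyticAt ℝ f 0) :
    HasFPowerSeriesAt (sqDescent f) (evenTaylorSeries f) 0 := by
  refine ((evenTaylorSeries f).hasFPowerSeriesOnBall
    (radius_evenTaylorSeries_pos he hf)).hasFPowerSeriesAt.congr ?_
  have hsqrt : Tendsto Real.sqrt (𝓝 0) (𝓝 0) := Real.continuous_sqrt.tendsto' 0 0 Real.sqrt_zero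
  filter_upwards [hsqrt.eventually (eventually_hasSum_evenTaylorSeries he hf)] with t ht
  by_cases h0 : 0 ≤ t
  · rw [sqDescent, if_pos h0, ← ht.tsum_eq, Real.sq_sqrt h0]; rfl
  · rw [sqDescent, if_neg h0]

theorem analyticAt_sqDescent_sq (he : f.Even) {x : ℝ} (hf : AnalyticAt ℝ f x) :
    AnalyticAt ℝ (sqDescent f) (x ^ 2) := by
  rcases eq_or_ne x 0 with rfl | hx
  · rw [zero_pow two_ne_zero]
    exact (hasFPowerSeriesAt_sqDescent he hf).analyticAt
  refine (analyticAt_comp_iff_of_deriv_ne_zero (f := fun x : ℝ => x ^ 2) (by fun_prop) ?_).1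
    (by rwa [sqDescent_comp_sq he])
  simpa using hx

theorem deriv_sqDescent_zero (he : f.Even) (hf : AnalyticAt ℝ f 0) :
    deriv (sqDescent f) 0 = iteratedDeriv 2 f 0 / 2 := by
  simp [(hasFPowerSeriesAt_sqDescent he hf).deriv, evenTaylorSeries]

theorem deriv_eq_deriv_sqDescent_sq_mul (he : f.Even) {x : ℝ} (hf : AnalyticAt ℝ f x) :
    deriv f x = deriv (sqDescent f) (x ^ 2) * (2 * x) := by
  conv_lhs => rw [← sqDescent_comp_sq he]
  rw [deriv_comp (h := fun y : ℝ => y ^ 2) x (analyticAt_sqDescent_sq he hf).differentiableAt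
    (by fun_prop)]
  simp

end EvenFunctions

/-- Let `I = [-1,1]` and let `g : ℝ → ℝ` be real-analytic on a neighborhood of `I`, even,
strictly decreasing on `[0,1]`, with `g''(0) ≠ 0` and `g'(x) ≠ 0` for `x ∈ (0,1]`; let
`J := g(I) = [g(1), g(0)]`.  The pushforward `v ↦ v ∘ g` is a linear bijection between
real-analytic functions on `J` and even real-analytic functions on `I`: every even `W`
real-analytic on a neighborhood of `I` is of the form `W = v ∘ g` on `I` for some `v`
real-analytic on a neighborhood of `J`, uniquely determined on `J`; conversely `v ∘ g` is
even and real-analytic on a neighborhood of `I` for every such `v`. -/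
theorem stmt7
    (g : ℝ → ℝ)
    (hg_an : AnalyticOnNhd ℝ g (Icc (-1) 1))
    (hg_even : ∀ x : ℝ, g (-x) = g x)
    (hg_anti : StrictAntiOn g (Icc 0 1))
    (hg'' : iteratedDeriv 2 g 0 ≠ 0)
    (hg' : ∀ x ∈ Ioc (0 : ℝ) 1, deriv g x ≠ 0)
    (J : Set ℝ) (hJ : J = Icc (g 1) (g 0)) :
    (∀ W : ℝ → ℝ, (∀ x : ℝ, W (-x) = W x) → AnalyticOnNhd ℝ W (Icc (-1) 1) →
      ∃ v : ℝ → ℝ, AnalyticOnNhd ℝ v J ∧ (∀ x ∈ Icc (-1 : ℝ) 1, W x = v (g x)) ∧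
        ∀ v' : ℝ → ℝ, AnalyticOnNhd ℝ v' J → (∀ x ∈ Icc (-1 : ℝ) 1, W x = v' (g x)) →
          EqOn v v' J) ∧
    (∀ v : ℝ → ℝ, AnalyticOnNhd ℝ v J →
      (∀ x : ℝ, (v ∘ g) (-x) = (v ∘ g) x) ∧ AnalyticOnNhd ℝ (v ∘ g) (Icc (-1) 1)) := by
  subst hJ
  have hI : Icc (0 : ℝ) 1 ⊆ Icc (-1) 1 := Icc_subset_Icc (by norm_num) le_rfl
  have hJ_sub : Icc (g 1) (g 0) ⊆ g '' Icc 0 1 :=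
    intermediate_value_Icc' zero_le_one (hg_an.continuousOn.mono hI)
  refine ⟨fun W hW_even hW_an => ?_, fun v hv => ⟨fun x => by simp [hg_even],
    hv.comp hg_an (mapsTo_Icc_of_even_of_antitoneOn hg_even hg_anti.antitoneOn)⟩⟩
  have hg₁' : ∀ x ∈ Icc (0 : ℝ) 1, deriv (sqDescent g) (x ^ 2) ≠ 0 := by
    intro x hx
    rcases hx.1.eq_or_lt with rfl | hx0
    · rw [zero_pow two_ne_zero, deriv_sqDescent_zero hg_even (hg_an 0 (hI hx))]
      exact div_ne_zero hg'' two_ne_zero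
    · intro h0
      apply hg' x ⟨hx0, hx.2⟩
      rw [deriv_eq_deriv_sqDescent_sq_mul hg_even (hg_an x (hI hx)), h0, zero_mul]
  obtain ⟨v, hv_an, hv⟩ := exists_analyticOnNhd_comp_eqOn
    (isPreconnected_Icc.image _ (by fun_prop))
    (forall_mem_image.2 fun x hx => analyticAt_sqDescent_sq hg_even (hg_an x (hI hx)))
    (forall_mem_image.2 hg₁')
    (forall_mem_image.2 fun x hx => analyticAt_sqDescent_sq hW_even (hW_an x (hI hx)))
  have hWv : ∀ x ∈ Icc (-1 : ℝ) 1, W x = v (g x) := fun x hx => by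
    rw [← sqDescent_sq hW_even, ← sqDescent_sq hg_even]
    exact (hv ⟨|x|, ⟨abs_nonneg x, abs_le.2 hx⟩, sq_abs x⟩).symm
  have hg_image : g '' Icc 0 1 = sqDescent g '' ((· ^ 2) '' Icc 0 1) := by
    simp only [image_image, sqDescent_sq hg_even]
  refine ⟨v, hv_an.mono (hJ_sub.trans hg_image.subset), hWv, fun v' _ hv' y hy => ?_⟩
  obtain ⟨x, hx, rfl⟩ := hJ_sub hy
  rw [← hWv x (hI hx), hv' x (hI hx)]
end

section
/- For every integer m ≥ 1, the function V(x) = g'(x)·x^(2m-1) - (g(x))^(2m-1) is even and real-analytic on a neighborhood of I, so there is a real-analytic function v on a neighborhood of J with v(g(x)) = V(x) for all x ∈ I; this v satisfies -α·v(-x/α) - α·g'(y₁(x))·v(y₁(x)) = α^(-(2m-2))·v(x) for all x ∈ J. Hence α^(-(2m-2)) is an eigenvalue of the induced operator on analytic vector fields for every m ≥ 1 (for m = 1 one obtains the eigenvalue 1). -/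
/-!
`V` is even and `g` is injective on `[0, 1]`, so `V` factors as `v ∘ g`. The factor `v` is
analytic: away from `0` one inverts `g` locally, because `g'` has no zero in `(0, 1]` (by the chain
rule for `g(x) = -α g(g(x/α))`, a zero `w` would produce zeros `w/αʲ → 0`, whereas `g''(0) ≠ 0`);
at `0`, where `g'(0) = 0`, both `V` and `g` are analytic functions of `x²`.
For `x = g w ∈ J` one has `y₁(x) = g(w/α)` and `-x/α = g(g(w/α))`, so after substituting
`v ∘ g = V` the eigenvalue equation reduces to `g'(w) = -g'(g(w/α)) g'(w/α)`.
-/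

open Set Filter Topology FormalMultilinearSeries Function
open scoped ENNReal NNReal

theorem IsCompact.continuousOn_invFunOn {X Y : Type*} [TopologicalSpace X] [TopologicalSpace Y]
    [T2Space Y] [Nonempty X] {G : X → Y} {K : Set X} (hK : IsCompact K)
    (hG : ContinuousOn G K) (hinj : InjOn G K) : ContinuousOn (invFunOn G K) (G '' K) := by
  refine continuousOn_iff_isClosed.mpr fun C hC => ⟨G '' (C ∩ K), ?_, ?_⟩
  · exact ((hK.inter_left hC).image_of_continuousOn (hG.mono inter_subset_right)).isClosed
  · ext y
    constructor
    · rintro ⟨hyC, x, hx, rfl⟩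
      rw [mem_preimage, hinj.leftInvOn_invFunOn hx] at hyC
      exact ⟨⟨x, ⟨hyC, hx⟩, rfl⟩, x, hx, rfl⟩
    · rintro ⟨⟨x, ⟨hxC, hx⟩, rfl⟩, -⟩
      exact ⟨by rwa [mem_preimage, hinj.leftInvOn_invFunOn hx], x, hx, rfl⟩

theorem exists_analyticOnNhd_Icc_eqOn {u : ℝ → ℝ} {c d : ℝ} (hcd : c < d)
    (hu : ∀ y ∈ Icc c d, ∃ f : ℝ → ℝ, AnalyticAt ℝ f y ∧ f =ᶠ[𝓝[Icc c d] y] u) :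
    ∃ v : ℝ → ℝ, AnalyticOnNhd ℝ v (Icc c d) ∧ EqOn v u (Icc c d) := by
  classical
  obtain ⟨fc, hfc, hfcu⟩ := hu c (left_mem_Icc.mpr hcd.le)
  obtain ⟨fd, hfd, hfdu⟩ := hu d (right_mem_Icc.mpr hcd.le)
  set v : ℝ → ℝ := fun z => if z < c then fc z else if z ≤ d then u z else fd z
  have hvu : EqOn v u (Icc c d) := fun z hz => by simp [v, hz.2, not_lt.mpr hz.1]
  refine ⟨v, fun y hy => ?_, hvu⟩
  rcases hy.1.eq_or_lt with rfl | hcy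
  · refine hfc.congr ?_
    rw [← nhdsLT_sup_nhdsGE, EventuallyEq, eventually_sup, ← nhdsWithin_Icc_eq_nhdsGE hcd]
    refine ⟨?_, ?_⟩
    · filter_upwards [self_mem_nhdsWithin] with z (hz : z < c)
      simp [v, hz]
    · filter_upwards [hfcu, self_mem_nhdsWithin] with z hfz hz
      rw [hfz, hvu hz]
  rcases hy.2.eq_or_lt with rfl | hyd
  · refine hfd.congr ?_
    rw [← nhdsLE_sup_nhdsGT, EventuallyEq, eventually_sup, ← nhdsWithin_Icc_eq_nhdsLE hcd]
    refine ⟨?_, ?_⟩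
    · filter_upwards [hfdu, self_mem_nhdsWithin] with z hfz hz
      rw [hfz, hvu hz]
    · filter_upwards [self_mem_nhdsWithin] with z (hz : y < z)
      simp [v, not_lt.mpr (hcd.trans hz).le, not_le.mpr hz]
  obtain ⟨f, hf, hfu⟩ := hu y hy
  have hJ : Icc c d ∈ 𝓝 y := Icc_mem_nhds hcy hyd
  rw [nhdsWithin_eq_nhds.mpr hJ] at hfu
  refine hf.congr ?_
  filter_upwards [hfu, hJ] with z hfz hz
  rw [hfz, hvu hz]

theorem exists_analyticOnNhd_comp_eq {F G : ℝ → ℝ} {K : Set ℝ} {c d : ℝ} (hcd : c < d)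
    (hK : IsCompact K) (hG : ContinuousOn G K) (hinj : InjOn G K) (hGK : G '' K = Icc c d)
    (hloc : ∀ x ∈ K, ∃ f : ℝ → ℝ, AnalyticAt ℝ f (G x) ∧ ∀ᶠ t in 𝓝 x, F t = f (G t)) :
    ∃ v : ℝ → ℝ, AnalyticOnNhd ℝ v (Icc c d) ∧ ∀ x ∈ K, v (G x) = F x := by
  have hcont := hK.continuousOn_invFunOn hG hinj
  rw [hGK] at hcont
  obtain ⟨v, hv, hvu⟩ := exists_analyticOnNhd_Icc_eqOn (u := F ∘ invFunOn G K) hcd fun y hy => by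
    obtain ⟨x, hx, rfl⟩ : y ∈ G '' K := hGK ▸ hy
    obtain ⟨f, hf, hFf⟩ := hloc x hx
    have hlim : Tendsto (invFunOn G K) (𝓝[Icc c d] (G x)) (𝓝 x) := by
      simpa only [ContinuousWithinAt, hinj.leftInvOn_invFunOn hx] using hcont (G x) hy
    refine ⟨f, hf, ?_⟩
    filter_upwards [hlim.eventually hFf, self_mem_nhdsWithin] with z hz hzJ
    rw [comp_apply, hz, invFunOn_eq (hGK ▸ hzJ : z ∈ G '' K)]
  refine ⟨v, hv, fun x hx => ?_⟩
  rw [hvu (hGK ▸ mem_image_of_mem G hx), comp_apply, hinj.leftInvOn_invFunOn hx]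

theorem AnalyticAt.exists_eventually_eq_comp {F G : ℝ → ℝ} {a : ℝ} (hF : AnalyticAt ℝ F a)
    (hG : AnalyticAt ℝ G a) (hG' : deriv G a ≠ 0) :
    ∃ f : ℝ → ℝ, AnalyticAt ℝ f (G a) ∧ ∀ᶠ x in 𝓝 a, F x = f (G x) := by
  have hinv := hG.hasStrictDerivAt
  refine ⟨F ∘ hinv.localInverse G _ a hG', ?_, ?_⟩
  · have hinv_a : hinv.localInverse G _ a hG' (G a) = a :=
      HasStrictFDerivAt.localInverse_apply_image ..
    exact (hinv_a ▸ hF).comp (hG.analyticAt_localInverse hG')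
  · filter_upwards [hinv.eventually_left_inverse hG'] with x hx
    rw [comp_apply, hx]

theorem iteratedDeriv_two_eq_of_eventually_eq_comp_sq {F Φ : ℝ → ℝ} (hΦ : AnalyticAt ℝ Φ 0)
    (hFΦ : ∀ᶠ x in 𝓝 0, F x = Φ (x ^ 2)) : iteratedDeriv 2 F 0 = 2 * deriv Φ 0 := by
  have hsq : Tendsto (fun x : ℝ => x ^ 2) (𝓝 0) (𝓝 0) :=
    (continuous_pow 2).tendsto' 0 0 (by simp)
  have hdF : deriv F =ᶠ[𝓝 0] fun x => deriv Φ (x ^ 2) * (2 * x) := by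
    filter_upwards [hFΦ.eventually_nhds, hsq.eventually hΦ.eventually_analyticAt] with x hx hΦx
    rw [EventuallyEq.deriv_eq (f := fun z => Φ (z ^ 2)) hx, ← comp_def,
      deriv_comp (h := fun z : ℝ => z ^ 2) x hΦx.differentiableAt (differentiableAt_pow 2)]
    simp
  have hd : HasDerivAt (fun x : ℝ => deriv Φ (x ^ 2) * (2 * x)) (2 * deriv Φ 0) 0 := by
    have hsq' : HasDerivAt (fun x : ℝ => x ^ 2) 0 0 := by simpa using hasDerivAt_pow 2 (0 : ℝ)
    have := ((hΦ.deriv.differentiableAt.hasDerivAt.comp_of_eq 0 hsq' (by simp)).fun_mul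
      ((hasDerivAt_id (0 : ℝ)).const_mul 2))
    simpa [mul_comm] using this
  rw [iteratedDeriv_succ, iteratedDeriv_one, hdF.deriv_eq, hd.deriv]

theorem AnalyticAt.exists_eventually_eq_comp_sq {F : ℝ → ℝ} (hF : AnalyticAt ℝ F 0)
    (hF_even : ∀ x, F (-x) = F x) :
    ∃ Φ : ℝ → ℝ, AnalyticAt ℝ Φ 0 ∧ ∀ᶠ x in 𝓝 0, F x = Φ (x ^ 2) := by
  obtain ⟨p, hp⟩ := hF
  obtain ⟨r, hr0, hrp⟩ := ENNReal.lt_iff_exists_nnreal_btwn.mp hp.radius_pos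
  obtain ⟨C, -, hC⟩ := p.norm_mul_pow_le_of_lt_radius hrp
  set q : FormalMultilinearSeries ℝ ℝ ℝ := ofScalars ℝ fun k => p.coeff (2 * k)
  have hq : (↑(r ^ 2) : ℝ≥0∞) ≤ q.radius := by
    refine q.le_radius_of_bound C fun k => ?_
    calc ‖q k‖ * ((r ^ 2 : ℝ≥0) : ℝ) ^ k = ‖p (2 * k)‖ * (r : ℝ) ^ (2 * k) := by
          rw [ofScalars_norm, ← p.norm_apply_eq_norm_coef]; push_cast; ring
      _ ≤ C := hC (2 * k)
  have hq0 : 0 < q.radius :=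
    lt_of_lt_of_le (by rw [ENNReal.coe_pow]; exact ENNReal.pow_pos hr0 2) hq
  refine ⟨q.sum, (q.hasFPowerSeriesOnBall hq0).analyticAt, ?_⟩
  have hsum : ∀ᶠ x in 𝓝 (0 : ℝ), HasSum (fun n => x ^ n • p.coeff n) (F x) := by
    simpa using hasFPowerSeriesAt_iff.mp hp
  have hsum_neg : ∀ᶠ x in 𝓝 (0 : ℝ), HasSum (fun n => (-x) ^ n • p.coeff n) (F x) := by
    filter_upwards [(continuous_neg.tendsto' (0 : ℝ) 0 neg_zero).eventually hsum] with x hx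
    rwa [hF_even] at hx
  have hsq : ∀ᶠ x in 𝓝 (0 : ℝ), x ^ 2 ∈ Metric.eball (0 : ℝ) q.radius :=
    ((continuous_pow 2).tendsto' (0 : ℝ) 0 (by simp)).eventually (Metric.eball_mem_nhds 0 hq0)
  filter_upwards [hsum, hsum_neg, hsq] with x h₁ h₂ h₃
  -- averaging the expansions at `x` and `-x` kills the odd coefficients
  have havg : HasSum (fun n => (x ^ n • p.coeff n + (-x) ^ n • p.coeff n) / 2) (F x) := by
    simpa using (h₁.add h₂).div_const 2
  have hodd : ∀ n ∉ range (2 * ·), (x ^ n • p.coeff n + (-x) ^ n • p.coeff n) / 2 = 0 := by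
    intro n hn
    have : Odd n := Nat.not_even_iff_odd.mp fun ⟨k, hk⟩ => hn ⟨k, show 2 * k = n by omega⟩
    rw [this.neg_pow, smul_eq_mul, smul_eq_mul]
    ring
  have heven := ((mul_right_injective₀ two_ne_zero).hasSum_iff hodd).mpr havg
  have hq_sum : HasSum (fun k => (x ^ 2) ^ k * p.coeff (2 * k)) (q.sum (x ^ 2)) := by
    simpa [q, coeff_ofScalars] using (q.hasFPowerSeriesOnBall hq0).hasSum h₃
  refine (heven.congr_fun fun k => ?_).unique hq_sum
  simp only [comp_apply, smul_eq_mul, (even_two_mul k).neg_pow, pow_mul]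
  ring

theorem AnalyticAt.exists_eventually_eq_comp_of_even {F G : ℝ → ℝ} (hF : AnalyticAt ℝ F 0)
    (hG : AnalyticAt ℝ G 0) (hF_even : ∀ x, F (-x) = F x) (hG_even : ∀ x, G (-x) = G x)
    (hG'' : iteratedDeriv 2 G 0 ≠ 0) :
    ∃ f : ℝ → ℝ, AnalyticAt ℝ f (G 0) ∧ ∀ᶠ x in 𝓝 0, F x = f (G x) := by
  obtain ⟨ΦF, hΦF, hFΦ⟩ := hF.exists_eventually_eq_comp_sq hF_even
  obtain ⟨ΦG, hΦG, hGΦ⟩ := hG.exists_eventually_eq_comp_sq hG_even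
  have hΦG' : deriv ΦG 0 ≠ 0 := by
    rw [iteratedDeriv_two_eq_of_eventually_eq_comp_sq hΦG hGΦ] at hG''
    exact right_ne_zero_of_mul hG''
  obtain ⟨f, hf, hΦFf⟩ := hΦF.exists_eventually_eq_comp hΦG hΦG'
  have hG0 : G 0 = ΦG 0 := by simpa using hGΦ.self_of_nhds
  have hsq : Tendsto (fun x : ℝ => x ^ 2) (𝓝 0) (𝓝 0) :=
    (continuous_pow 2).tendsto' 0 0 (by simp)
  refine ⟨f, hG0 ▸ hf, ?_⟩
  filter_upwards [hFΦ, hGΦ, hsq.eventually hΦFf] with x hFx hGx hfx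
  rw [hFx, hGx, hfx]

theorem AnalyticAt.ne_zero_of_zero_imp_zero_div {f : ℝ → ℝ} {c : ℝ} (hf : AnalyticAt ℝ f 0)
    (hf' : deriv f 0 ≠ 0) (hc : 1 < c) (hzero : ∀ x ∈ Ioc (0 : ℝ) 1, f x = 0 → f (x / c) = 0) :
    ∀ x ∈ Ioc (0 : ℝ) 1, f x ≠ 0 := by
  intro x hx hfx
  have hc0 : 0 < c := one_pos.trans hc
  have hzeros : ∀ j : ℕ, x / c ^ j ∈ Ioc (0 : ℝ) 1 ∧ f (x / c ^ j) = 0 := by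
    intro j
    induction j with
    | zero => simpa using ⟨hx, hfx⟩
    | succ j ih =>
      rw [pow_succ, ← div_div]
      exact ⟨⟨div_pos ih.1.1 hc0, (div_le_self ih.1.1.le hc.le).trans ih.1.2⟩, hzero _ ih.1 ih.2⟩
  have hlim : Tendsto (fun j : ℕ => x / c ^ j) atTop (𝓝[≠] 0) := by
    refine tendsto_nhdsWithin_iff.mpr ⟨?_, .of_forall fun j => (hzeros j).1.1.ne'⟩
    simpa [div_eq_mul_inv] using (tendsto_pow_atTop_nhds_zero_of_lt_one (inv_nonneg.mpr hc0.le)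
      (inv_lt_one_of_one_lt₀ hc)).const_mul x
  have hfreq : ∃ᶠ z in 𝓝[≠] 0, f z = 0 :=
    hlim.frequently (.of_forall fun j => (hzeros j).2)
  have hloc : f =ᶠ[𝓝 0] fun _ => 0 := hf.frequently_zero_iff_eventually_zero.mp hfreq
  exact hf' (hloc.deriv_eq.trans (deriv_const 0 0))

theorem apply_abs_of_even {f : ℝ → ℝ} (hf : ∀ x, f (-x) = f x) (x : ℝ) : f |x| = f x := by
  rcases abs_choice x with h | h <;> simp [h, hf]

theorem deriv_eq_of_eqOn {f₁ f₂ : ℝ → ℝ} {s : Set ℝ} {x : ℝ} (hs : UniqueDiffWithinAt ℝ s x)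
    (hx : x ∈ s) (h : EqOn f₁ f₂ s) (h₁ : DifferentiableAt ℝ f₁ x)
    (h₂ : DifferentiableAt ℝ f₂ x) : deriv f₁ x = deriv f₂ x := by
  rw [← h₁.derivWithin hs, ← h₂.derivWithin hs, derivWithin_congr h (h hx)]

namespace Feigenbaum

variable {g : ℝ → ℝ} {α : ℝ} {n : ℕ}

/-- The field `V` of the paper, for `n = 2m - 1`: with `p x = xⁿ`, `V = g' · p - p ∘ g` is the
first-order variation of `g` under conjugation by the flow of `p`. -/
noncomputable def conjugationField (g : ℝ → ℝ) (n : ℕ) (x : ℝ) : ℝ := deriv g x * x ^ n - g x ^ n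

theorem conjugationField_neg (hg_even : ∀ x, g (-x) = g x) (hn : Odd n) (x : ℝ) :
    conjugationField g n (-x) = conjugationField g n x := by
  have hg' : deriv g (-x) = -deriv g x := by
    have h := deriv_comp_neg (f := g) (x := x)
    rw [show (fun y => g (-y)) = g from funext hg_even] at h
    linarith
  simp only [conjugationField, hg', hg_even, hn.neg_pow]
  ring

theorem analyticOnNhd_conjugationField {s : Set ℝ} (hg : AnalyticOnNhd ℝ g s) :
    AnalyticOnNhd ℝ (conjugationField g n) s := fun x hx =>
  ((hg.deriv x hx).mul (analyticAt_id.pow n)).sub ((hg x hx).pow n)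

theorem mapsTo_Icc (hg_even : ∀ x, g (-x) = g x) (hg_anti : StrictAntiOn g (Icc 0 1))
    (hg0 : g 0 = 1) : MapsTo g (Icc (-1) 1) (Icc (g 1) 1) := by
  intro x hx
  have habs : |x| ∈ Icc (0 : ℝ) 1 := ⟨abs_nonneg x, abs_le.mpr hx⟩
  rw [← apply_abs_of_even hg_even x]
  exact ⟨hg_anti.antitoneOn habs (right_mem_Icc.mpr zero_le_one) habs.2,
    hg0 ▸ hg_anti.antitoneOn (left_mem_Icc.mpr zero_le_one) habs habs.1⟩

theorem div_mem_Icc {x : ℝ} (hα1 : 1 ≤ α) (hx : x ∈ Icc (-1 : ℝ) 1) : x / α ∈ Icc (-1 : ℝ) 1 := by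
  have hα0 : 0 < α := one_pos.trans_le hα1
  rw [mem_Icc, ← abs_le, abs_div, abs_of_pos hα0, div_le_one hα0]
  exact (abs_le.mpr hx).trans hα1

theorem deriv_eq_neg_deriv_mul_deriv (hg_an : AnalyticOnNhd ℝ g (Icc (-1) 1)) (hα1 : 1 ≤ α)
    (hmaps : MapsTo g (Icc (-1) 1) (Icc (-1) 1))
    (hCF : ∀ x ∈ Icc (-1 : ℝ) 1, g x = -α * g (g (x / α))) :
    ∀ x ∈ Icc (-1 : ℝ) 1, deriv g x = -(deriv g (g (x / α)) * deriv g (x / α)) := by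
  intro x hx
  have hα0 : α ≠ 0 := (one_pos.trans_le hα1).ne'
  have hxα := div_mem_Icc hα1 hx
  have hRHS : HasDerivAt (fun z => -α * g (g (z / α)))
      (-α * (deriv g (g (x / α)) * (deriv g (x / α) * (1 / α)))) x :=
    (((hg_an _ (hmaps hxα)).differentiableAt.hasDerivAt.comp x
      ((hg_an _ hxα).differentiableAt.hasDerivAt.comp x
        ((hasDerivAt_id x).div_const α))).const_mul (-α))
  rw [deriv_eq_of_eqOn (uniqueDiffOn_Icc (by norm_num) x hx) hx hCF
    (hg_an x hx).differentiableAt hRHS.differentiableAt, hRHS.deriv]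
  field_simp

theorem neg_apply_one_eq_inv (hα : α = -1 / g 1) (hα1 : 1 < α) : -g 1 = α⁻¹ := by
  have hg1 : g 1 ≠ 0 := fun h => by norm_num [h] at hα; linarith
  rw [hα]
  field_simp

theorem mapsTo_Icc_comp_div (hg_even : ∀ x, g (-x) = g x) (hg_anti : StrictAntiOn g (Icc 0 1))
    (hg0 : g 0 = 1) (hα : α = -1 / g 1) (hα1 : 1 < α) :
    MapsTo (fun x => g (x / α)) (Icc 0 1) (Icc (g (g 1)) 1) := by
  intro x hx
  have hα0 : 0 < α := one_pos.trans hα1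
  have hg1 := neg_apply_one_eq_inv hα hα1
  have hg1_mem : -g 1 ∈ Icc (0 : ℝ) 1 :=
    hg1 ▸ ⟨inv_nonneg.mpr hα0.le, inv_le_one_of_one_le₀ hα1.le⟩
  have hxα : x / α ∈ Icc (0 : ℝ) (-g 1) :=
    ⟨div_nonneg hx.1 hα0.le, by rw [hg1, ← one_div]; exact div_le_div_of_nonneg_right hx.2 hα0.le⟩
  have hxα_mem : x / α ∈ Icc (0 : ℝ) 1 := ⟨hxα.1, hxα.2.trans hg1_mem.2⟩
  refine ⟨?_, hg0 ▸ hg_anti.antitoneOn (left_mem_Icc.mpr zero_le_one) hxα_mem hxα.1⟩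
  rw [← hg_even (g 1)]
  exact hg_anti.antitoneOn hxα_mem hg1_mem hxα.2

theorem deriv_ne_zero_of_mem_Ioc (hg_an : AnalyticAt ℝ g 0) (hg'' : iteratedDeriv 2 g 0 ≠ 0)
    (hα1 : 1 < α)
    (hchain : ∀ x ∈ Icc (-1 : ℝ) 1, deriv g x = -(deriv g (g (x / α)) * deriv g (x / α)))
    (hJ₁ : ∀ x ∈ Icc (0 : ℝ) 1, deriv g (g (x / α)) ≠ 0) :
    ∀ x ∈ Ioc (0 : ℝ) 1, deriv g x ≠ 0 := by
  rw [iteratedDeriv_succ, iteratedDeriv_one] at hg''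
  refine hg_an.deriv.ne_zero_of_zero_imp_zero_div hg'' hα1 fun x hx hx0 => ?_
  have h := hchain x ⟨by linarith [hx.1], hx.2⟩
  rw [hx0, zero_eq_neg, mul_eq_zero] at h
  exact h.resolve_left (hJ₁ x (Ioc_subset_Icc_self hx))

theorem exists_analyticOnNhd_comp_eq_conjugationField
    (hg_an : AnalyticOnNhd ℝ g (Icc (-1) 1)) (hg_even : ∀ x, g (-x) = g x)
    (hg_anti : StrictAntiOn g (Icc 0 1)) (hg0 : g 0 = 1) (hg'' : iteratedDeriv 2 g 0 ≠ 0)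
    (hderiv : ∀ x ∈ Ioc (0 : ℝ) 1, deriv g x ≠ 0) (hn : Odd n) :
    ∃ v : ℝ → ℝ, AnalyticOnNhd ℝ v (Icc (g 1) 1) ∧
      ∀ x ∈ Icc (-1 : ℝ) 1, v (g x) = conjugationField g n x := by
  have hI : Icc (0 : ℝ) 1 ⊆ Icc (-1) 1 := Icc_subset_Icc (by norm_num) le_rfl
  have hcont : ContinuousOn g (Icc 0 1) := (hg_an.mono hI).continuousOn
  have himage : g '' Icc 0 1 = Icc (g 1) 1 := by
    rw [hcont.image_Icc_of_antitoneOn zero_le_one hg_anti.antitoneOn, hg0]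
  have hg1 : g 1 < 1 :=
    (hg_anti (left_mem_Icc.mpr zero_le_one) (right_mem_Icc.mpr zero_le_one) one_pos).trans_eq hg0
  have hV := analyticOnNhd_conjugationField (n := n) hg_an
  obtain ⟨v, hv, hvg⟩ := exists_analyticOnNhd_comp_eq hg1 isCompact_Icc hcont hg_anti.injOn
    himage fun x hx => by
      rcases hx.1.eq_or_lt with rfl | hx0
      -- `g'(0) = 0`, so factor through `x ↦ x²` instead of inverting `g`
      · exact (hV 0 (hI hx)).exists_eventually_eq_comp_of_even (hg_an 0 (hI hx))
          (conjugationField_neg hg_even hn) hg_even hg''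
      · exact (hV x (hI hx)).exists_eventually_eq_comp (hg_an x (hI hx)) (hderiv x ⟨hx0, hx.2⟩)
  refine ⟨v, hv, fun x hx => ?_⟩
  have habs : |x| ∈ Icc (0 : ℝ) 1 := ⟨abs_nonneg x, abs_le.mpr hx⟩
  rw [← apply_abs_of_even hg_even, hvg _ habs,
    apply_abs_of_even (conjugationField_neg hg_even hn)]

theorem conjugationField_renormalization (hα1 : 1 < α)
    (hmaps : MapsTo g (Icc (-1) 1) (Icc (-1) 1))
    (hCF : ∀ x ∈ Icc (-1 : ℝ) 1, g x = -α * g (g (x / α)))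
    (hchain : ∀ x ∈ Icc (-1 : ℝ) 1, deriv g x = -(deriv g (g (x / α)) * deriv g (x / α)))
    (hn : Odd n) {v : ℝ → ℝ} (hv : ∀ x ∈ Icc (-1 : ℝ) 1, v (g x) = conjugationField g n x)
    {w : ℝ} (hw : w ∈ Icc (-1 : ℝ) 1) :
    -α * v (-g w / α) - α * deriv g (g (w / α)) * v (g (w / α))
      = α ^ (1 - (n : ℤ)) * v (g w) := by
  have hα0 : α ≠ 0 := (one_pos.trans hα1).ne'
  have hwα := div_mem_Icc hα1.le hw
  have hgw : -g w / α = g (g (w / α)) := by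
    rw [hCF w hw]
    field_simp
  rw [hgw, hv _ (hmaps hwα), hv _ hwα, hv _ hw]
  simp only [conjugationField]
  rw [hchain w hw, ← hgw, zpow_sub₀ hα0, zpow_one, zpow_natCast, div_pow, div_pow, hn.neg_pow]
  field_simp
  ring

end Feigenbaum

open Feigenbaum

theorem stmt12_general
    (g : ℝ → ℝ) (α : ℝ)
    (hg_an : AnalyticOnNhd ℝ g (Icc (-1) 1))
    (hg_even : ∀ x : ℝ, g (-x) = g x)
    (hg_anti : StrictAntiOn g (Icc 0 1))
    (hg0 : g 0 = 1)
    (hg'' : iteratedDeriv 2 g 0 < 0)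
    (h4 : -g 1 < g (g 1))
    (hα : α = -1 / g 1) (hα1 : 1 < α)
    (hCF : ∀ x ∈ Icc (-1 : ℝ) 1, g x = -α * g (g (-x / α)))
    (J J₁ : Set ℝ)
    (hJ : J = Icc (g 1) 1) (hJ₁ : J₁ = Icc (g (g 1)) 1)
    (hg'J₁ : ∀ x ∈ J₁, 1 < |deriv g x|)
    (σ : ℝ → ℝ)
    (hσ1 : ∀ x ∈ J₁, σ x = -α * g x)
    (y₁ : ℝ → ℝ)
    (hy₁ : ∀ x ∈ J, y₁ x ∈ J₁ ∧ σ (y₁ x) = x)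
    (m : ℕ) (hm : 1 ≤ m) :
    (∀ x : ℝ, deriv g (-x) * (-x) ^ (2 * m - 1) - g (-x) ^ (2 * m - 1)
        = deriv g x * x ^ (2 * m - 1) - g x ^ (2 * m - 1)) ∧
    AnalyticOnNhd ℝ (fun x : ℝ => deriv g x * x ^ (2 * m - 1) - g x ^ (2 * m - 1))
      (Icc (-1) 1) ∧
    ∃ v : ℝ → ℝ, AnalyticOnNhd ℝ v J ∧
      (∀ x ∈ Icc (-1 : ℝ) 1, v (g x) = deriv g x * x ^ (2 * m - 1) - g x ^ (2 * m - 1)) ∧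
      ∀ x ∈ J, -α * v (-x / α) - α * deriv g (y₁ x) * v (y₁ x)
        = α ^ (-(2 * (m : ℤ) - 2)) * v x := by
  subst hJ hJ₁
  have hn : Odd (2 * m - 1) := ⟨m - 1, by omega⟩
  have hg1 := neg_apply_one_eq_inv hα hα1
  have hα_inv : α⁻¹ ≤ 1 := inv_le_one_of_one_le₀ hα1.le
  have hmaps : MapsTo g (Icc (-1) 1) (Icc (-1) 1) :=
    (mapsTo_Icc hg_even hg_anti hg0).mono_right (Icc_subset_Icc (by linarith) le_rfl)
  have hCF' : ∀ x ∈ Icc (-1 : ℝ) 1, g x = -α * g (g (x / α)) := fun x hx => by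
    rw [hCF x hx, neg_div, hg_even]
  have hchain := deriv_eq_neg_deriv_mul_deriv hg_an hα1.le hmaps hCF'
  have hJ₁ := mapsTo_Icc_comp_div hg_even hg_anti hg0 hα hα1
  have hderiv := deriv_ne_zero_of_mem_Ioc (hg_an 0 (by norm_num)) hg''.ne hα1 hchain fun x hx h0 =>
    absurd (hg'J₁ _ (hJ₁ hx)) (by simp [h0])
  obtain ⟨v, hv, hvg⟩ :=
    exists_analyticOnNhd_comp_eq_conjugationField hg_an hg_even hg_anti hg0 hg''.ne hderiv hn
  refine ⟨conjugationField_neg hg_even hn, analyticOnNhd_conjugationField hg_an, v, hv, hvg, ?_⟩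
  intro x hx
  obtain ⟨w, hw, rfl⟩ := intermediate_value_Icc' zero_le_one
    (hg_an.mono (Icc_subset_Icc (by norm_num) le_rfl)).continuousOn (by rwa [hg0])
  have hw' : w ∈ Icc (-1 : ℝ) 1 := ⟨by linarith [hw.1], hw.2⟩
  have hy₁w : y₁ (g w) = g (w / α) := by
    have hJ₁_pos : Icc (g (g 1)) 1 ⊆ Icc 0 1 :=
      Icc_subset_Icc (by linarith [inv_pos.mpr (one_pos.trans hα1)]) le_rfl
    obtain ⟨hy, hσy⟩ := hy₁ _ hx
    refine hg_anti.injOn (hJ₁_pos hy) (hJ₁_pos (hJ₁ hw))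
      (mul_left_cancel₀ (neg_ne_zero.mpr (one_pos.trans hα1).ne') ?_)
    rw [← hσ1 _ hy, hσy, hCF' w hw']
  rw [hy₁w, show -(2 * (m : ℤ) - 2) = 1 - ((2 * m - 1 : ℕ) : ℤ) by omega]
  exact conjugationField_renormalization hα1 hmaps hCF' hchain hn hvg hw'

/-- Feigenbaum context as in the paper.  Claim: for every integer `m ≥ 1`, the function
`V(x) = g'(x)·x^(2m-1) - (g x)^(2m-1)` is even and real-analytic on a neighborhood of
`I = [-1,1]`, hence of the form `V = v ∘ g` on `I` for some `v` real-analytic on a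
neighborhood of `J`; this `v` satisfies
`-α·v(-x/α) - α·g'(y₁(x))·v(y₁(x)) = α^{-(2m-2)}·v(x)` for all `x ∈ J`, so
`α^{-(2m-2)}` is an eigenvalue of the induced operator on analytic vector fields
(eigenvalue `1` for `m = 1`). -/
theorem stmt12
    (g : ℝ → ℝ) (α : ℝ)
    (hg_an : AnalyticOnNhd ℝ g (Icc (-1) 1))
    (hg_even : ∀ x : ℝ, g (-x) = g x)
    (hg_anti : StrictAntiOn g (Icc 0 1))
    (hg0 : g 0 = 1)
    (hg'' : iteratedDeriv 2 g 0 < 0)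
    (h1 : g 1 < 0) (h2 : 0 < g (g (g 1))) (h3 : g (g (g 1)) < -g 1) (h4 : -g 1 < g (g 1))
    (hα : α = -1 / g 1) (hα1 : 1 < α)
    (hCF : ∀ x ∈ Icc (-1 : ℝ) 1, g x = -α * g (g (-x / α)))
    (J J₀ J₁ : Set ℝ)
    (hJ : J = Icc (g 1) 1) (hJ₀ : J₀ = Icc (g 1) (g (g (g 1)))) (hJ₁ : J₁ = Icc (g (g 1)) 1)
    (hg'J₁ : ∀ x ∈ J₁, 1 < |deriv g x|)
    (σ : ℝ → ℝ)
    (hσ0 : ∀ x ∈ J₀, σ x = -α * x)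
    (hσ1 : ∀ x ∈ J₁, σ x = -α * g x)
    (Λ : Set ℝ)
    (hΛ : Λ = {x : ℝ | ∀ k : ℕ, σ^[k] x ∈ J₀ ∪ J₁})
    (y₁ : ℝ → ℝ)
    (hy₁ : ∀ x ∈ J, y₁ x ∈ J₁ ∧ σ (y₁ x) = x)
    (m : ℕ) (hm : 1 ≤ m) :
    (∀ x : ℝ, deriv g (-x) * (-x) ^ (2 * m - 1) - g (-x) ^ (2 * m - 1)
        = deriv g x * x ^ (2 * m - 1) - g x ^ (2 * m - 1)) ∧
    AnalyticOnNhd ℝ (fun x : ℝ => deriv g x * x ^ (2 * m - 1) - g x ^ (2 * m - 1))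
      (Icc (-1) 1) ∧
    ∃ v : ℝ → ℝ, AnalyticOnNhd ℝ v J ∧
      (∀ x ∈ Icc (-1 : ℝ) 1, v (g x) = deriv g x * x ^ (2 * m - 1) - g x ^ (2 * m - 1)) ∧
      ∀ x ∈ J, -α * v (-x / α) - α * deriv g (y₁ x) * v (y₁ x)
        = α ^ (-(2 * (m : ℤ) - 2)) * v x :=
  stmt12_general g α hg_an hg_even hg_anti hg0 hg'' h4 hα hα1 hCF J J₁ hJ hJ₁ hg'J₁ σ hσ1 y₁ hy₁ m
    hm
end
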